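/- arXiv:2211.01881 — 3 statements merged into one kernel-verified Lean document; each statement's English description precedes it below -/
import Mathlib

section
/- A connected signed graph (G,σ) is flow-admissible if and only if it is not equivalent (under switchings) to a signed graph with exactly one negative edge and it has no bridge b such that (G−b, σ restricted to G−b) has a balanced component. -/
/-- A signed graph: a multigraph (loops and multiple edges allowed) with vertex type `V`
and edge type `E`, where edge `e` joins `fst e` and `snd e`, together with a signature
`sign : E → ℤ` taking values in `{1, -1}`. -/
structure SignedGraph (V E : Type) where
  fst : E → V
  snd : E → V
  sign : E → ℤ
  sign_unit : ∀ e, sign e = 1 ∨ sign e = -1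

namespace SignedGraph

variable {V E : Type}

/-- A circuit in a signed graph: pairwise distinct vertices `vert 0, …, vert (n-1)` and
pairwise distinct edges `edge 0, …, edge (n-1)` with `edge i` joining `vert i` and
`vert ((i+1) % n)`.  (`n = 1` gives a loop, `n = 2` a digon.) -/
structure Circuit (G : SignedGraph V E) where
  n : ℕ
  n_pos : 0 < n
  vert : ℕ → V
  edge : ℕ → E
  vert_inj : ∀ i < n, ∀ j < n, vert i = vert j → i = j
  edge_inj : ∀ i < n, ∀ j < n, edge i = edge j → i = j
  ends : ∀ i < n,
    (G.fst (edge i) = vert i ∧ G.snd (edge i) = vert ((i + 1) % n)) ∨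
    (G.snd (edge i) = vert i ∧ G.fst (edge i) = vert ((i + 1) % n))

namespace Circuit

variable {G : SignedGraph V E}

/-- Edge set of a circuit. -/
def edgeSet (c : Circuit G) : Set E := {e | ∃ i < c.n, c.edge i = e}

/-- Vertex set of a circuit. -/
def vertSet (c : Circuit G) : Set V := {v | ∃ i < c.n, c.vert i = v}

/-- The number of negative edges of a circuit. -/
noncomputable def negCount (c : Circuit G) : ℕ :=
  {i | i < c.n ∧ G.sign (c.edge i) = -1}.ncard

/-- A circuit is balanced if it contains an even number of negative edges. -/
def IsBalanced (c : Circuit G) : Prop := Even c.negCount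

end Circuit

variable (G : SignedGraph V E)

/-- The endpoint of a half edge `(e, b)`: each edge `e` is regarded as the two half
edges `(e, true)` (at `fst e`) and `(e, false)` (at `snd e`). -/
def ep (h : E × Bool) : V := if h.2 then G.fst h.1 else G.snd h.1

/-- An orientation assigns `±1` to each half edge so that the two half edges of an
edge `e` multiply to `- sign e`. -/
def IsOrientation (τ : E × Bool → ℤ) : Prop :=
  (∀ h, τ h = 1 ∨ τ h = -1) ∧ ∀ e : E, τ (e, true) * τ (e, false) = - G.sign e

/-- The boundary of `(τ, f)` at a vertex `v`: the sum of `τ h * f e` over all half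
edges `h` of edges `e` incident with `v`. -/
noncomputable def boundary (τ : E × Bool → ℤ) (f : E → ℤ) (v : V) : ℤ :=
  ∑ᶠ h ∈ {h : E × Bool | G.ep h = v}, τ h * f h.1

/-- `(τ, f)` is a `k`-flow: `τ` is an orientation, `|f e| ≤ k - 1` everywhere, and the
boundary vanishes at every vertex. -/
def IsFlow (k : ℤ) (τ : E × Bool → ℤ) (f : E → ℤ) : Prop :=
  G.IsOrientation τ ∧ (∀ e, |f e| ≤ k - 1) ∧ ∀ v, G.boundary τ f v = 0

/-- `(τ, f)` is a `ℤ_k`-flow: `τ` is an orientation, `|f e| ≤ k - 1` everywhere, and the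
boundary is divisible by `k` at every vertex. -/
def IsZFlow (k : ℤ) (τ : E × Bool → ℤ) (f : E → ℤ) : Prop :=
  G.IsOrientation τ ∧ (∀ e, |f e| ≤ k - 1) ∧ ∀ v, k ∣ G.boundary τ f v

/-- `f` is nowhere-zero. -/
def NowhereZero (_G : SignedGraph V E) (f : E → ℤ) : Prop := ∀ e, f e ≠ 0

/-- `G` admits a nowhere-zero `k`-flow. -/
def HasNZFlow (k : ℤ) : Prop := ∃ τ f, G.IsFlow k τ f ∧ G.NowhereZero f

/-- `G` is flow-admissible: it admits a nowhere-zero `k`-flow for some integer `k ≥ 2`. -/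
def FlowAdmissible : Prop := ∃ k : ℤ, 2 ≤ k ∧ G.HasNZFlow k

/-- The support of `f`. -/
def supp (_G : SignedGraph V E) (f : E → ℤ) : Set E := {e | f e ≠ 0}

/-- The degree of a vertex: the number of half edges incident with it (a loop counts
twice). -/
noncomputable def degree (v : V) : ℕ := {h : E × Bool | G.ep h = v}.ncard

/-- The degree of `v` in the subgraph with edge set `A`. -/
noncomputable def degIn (A : Set E) (v : V) : ℕ :=
  {h : E × Bool | h.1 ∈ A ∧ G.ep h = v}.ncard

/-- `G` is cubic: every vertex has degree 3. -/
def Cubic : Prop := ∀ v, G.degree v = 3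

/-- Adjacency via an edge belonging to `A`. -/
def adjIn (A : Set E) (u v : V) : Prop :=
  ∃ e ∈ A, (G.fst e = u ∧ G.snd e = v) ∨ (G.fst e = v ∧ G.snd e = u)

/-- Reachability inside the subgraph with edge set `A`. -/
def reachIn (A : Set E) : V → V → Prop := Relation.ReflTransGen (G.adjIn A)

/-- `G` is connected. -/
def Connected : Prop := ∀ u v, G.reachIn Set.univ u v

/-- `e` is a bridge (cut edge) of the underlying graph. -/
def IsBridge (e : E) : Prop := ¬ G.reachIn {e' | e' ≠ e} (G.fst e) (G.snd e)

/-- `G` is bridgeless. -/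
def Bridgeless : Prop := ∀ e, ¬ G.IsBridge e

/-- The edge set `A` contains no circuit. -/
def Acyclic (A : Set E) : Prop := ∀ c : Circuit G, ¬ c.edgeSet ⊆ A

/-- Every circuit with all edges in `A` is balanced. -/
def BalancedOn (A : Set E) : Prop := ∀ c : Circuit G, c.edgeSet ⊆ A → c.IsBalanced

/-- `G` is balanced: it contains no unbalanced circuit. -/
def Balanced : Prop := ∀ c : Circuit G, c.IsBalanced

/-- The number of negative edges in `A`. -/
noncomputable def negEdgeCount (A : Set E) : ℕ := {e ∈ A | G.sign e = -1}.ncard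

/-- The edges of the connected component of `v` in the subgraph with edge set `A`. -/
def compEdges (A : Set E) (v : V) : Set E := {e ∈ A | G.reachIn A v (G.fst e)}

/-- The number of (nonempty) components of the subgraph with edge set `A` containing an
odd number of negative edges. -/
noncomputable def oddCompCount (A : Set E) : ℕ :=
  {S : Set E | (∃ v, S = G.compEdges A v) ∧ S.Nonempty ∧ Odd (G.negEdgeCount S)}.ncard

/-- The number of unbalanced circuits (counted by their edge sets) all of whose edges
lie in `A`. -/
noncomputable def unbalCircCount (A : Set E) : ℕ :=
  {S : Set E | ∃ c : Circuit G, c.edgeSet = S ∧ S ⊆ A ∧ ¬ c.IsBalanced}.ncard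

/-- Vertices incident with an edge of `A`. -/
def vertsIn (A : Set E) : Set V := {v | ∃ e ∈ A, G.fst e = v ∨ G.snd e = v}

/-- A proper 3-edge-coloring: edges sharing an endvertex receive different colors. -/
def IsProper3EdgeColoring (col : E → Fin 3) : Prop :=
  ∀ e e', e ≠ e' →
    (G.fst e = G.fst e' ∨ G.fst e = G.snd e' ∨ G.snd e = G.fst e' ∨ G.snd e = G.snd e') →
    col e ≠ col e'

/-- `G` is 3-edge-colorable. -/
def ThreeEdgeColorable : Prop := ∃ col : E → Fin 3, G.IsProper3EdgeColoring col

/-- `G` is hamiltonian: it contains a circuit through all vertices. -/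
def Hamiltonian : Prop := ∃ c : Circuit G, ∀ v : V, v ∈ c.vertSet

end SignedGraph

namespace SignedGraph

/-- `σ'` is obtained from the signature of `G` by a sequence of switchings, i.e. there
is a `±1`-valued function `ε` on the vertices with
`σ' e = ε (fst e) * ε (snd e) * sign e` for every edge. -/
def SwitchEquiv {V E : Type} (G : SignedGraph V E) (σ' : E → ℤ) : Prop :=
  ∃ ε : V → ℤ, (∀ v, ε v = 1 ∨ ε v = -1) ∧
    ∀ e, σ' e = ε (G.fst e) * ε (G.snd e) * G.sign e

/-- `G − b` has a balanced component: there is a vertex `v` such that every circuit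
avoiding `b` lying in the component of `v` of `G − b` is balanced. -/
def HasBalancedComponentWithout {V E : Type} (G : SignedGraph V E) (b : E) : Prop :=
  ∃ v : V, ∀ c : Circuit G, c.edgeSet ⊆ {e | e ≠ b} →
    G.reachIn {e | e ≠ b} v (c.vert 0) → c.IsBalanced

end SignedGraph

/-!
For `w : V → R` write `δw e = w (fst e) - σ e * w (snd e)`, the transpose of the boundary map
(`vecMul_incMatrix_apply`), so that `∑ e, δw e * f e = 0` for every flow `f`. Call `w` a
potential on `G − e` if `δw` vanishes off `e`. Since flows that are nonzero on single edges
combine to a nowhere-zero rational flow, and denominators can be cleared, duality shows that `G`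
is flow-admissible iff no edge `e` carries a potential on `G − e` with `δw e ≠ 0`.

Both obstructions of the theorem are such potentials: a switching `ε` under which `e` is the
only negative edge, and, for a bridge `b` with a balanced component `C` of `G − b`, the sign of
walks in `C` from a fixed vertex, extended by `0`. Conversely, `|w|` is constant on the
components of `G − e` and nonzero at an end of `e`. Multiplying the relations `δw = 0` around a
circuit of that component shows that it is balanced; and if `e` is not a bridge, `G − e` is
connected and the sign of `w` is a switching under which `e` is the only negative edge.
-/

section LinearAlgebra

open Matrix

lemma Matrix.exists_int_mulVec_eq_zero_of_rat {m n : Type} [Fintype n] (A : Matrix m n ℤ)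
    {f : n → ℚ} (hf : A.map (Int.cast : ℤ → ℚ) *ᵥ f = 0) :
    ∃ g : n → ℤ, A *ᵥ g = 0 ∧ ∀ j, g j ≠ 0 ↔ f j ≠ 0 := by
  obtain ⟨⟨d, hd⟩, hdf⟩ := IsLocalization.exist_integer_multiples_of_finite (nonZeroDivisors ℤ) f
  choose g hg using hdf
  have hd0 : (d : ℚ) ≠ 0 := by exact_mod_cast nonZeroDivisors.ne_zero hd
  have hcast : (fun j => (g j : ℚ)) = (d : ℚ) • f := funext fun j => by simpa using hg j
  refine ⟨g, funext fun i => ?_, fun j => ?_⟩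
  · have hmap : ((A *ᵥ g) i : ℚ) = (A.map (Int.cast : ℤ → ℚ) *ᵥ fun j => (g j : ℚ)) i :=
      (Int.castRingHom ℚ).map_mulVec A g i
    rw [hcast, mulVec_smul, hf, smul_zero, Pi.zero_apply] at hmap
    exact_mod_cast hmap
  · have := congrFun hcast j
    simp only [Pi.smul_apply, smul_eq_mul] at this
    rw [ne_eq, ← Int.cast_eq_zero (α := ℚ), this, mul_eq_zero, not_or]
    exact and_iff_right hd0

lemma Submodule.exists_forall_apply_ne_zero {n K : Type} [Finite n] [Field K] [Infinite K]
    (S : Submodule K (n → K)) (hS : ∀ j, ∃ f ∈ S, f j ≠ 0) : ∃ f ∈ S, ∀ j, f j ≠ 0 := by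
  by_contra! hall
  obtain ⟨j, hj⟩ := Subspace.exists_eq_top_of_iUnion_eq_univ
    (p := fun j => LinearMap.ker ((LinearMap.proj j).comp S.subtype))
    (Set.eq_univ_of_forall fun f => Set.mem_iUnion.mpr (hall f f.2))
  obtain ⟨f, hfS, hfj⟩ := hS j
  exact hfj (LinearMap.congr_fun (LinearMap.ker_eq_top.mp hj) ⟨f, hfS⟩)

open scoped Classical in
lemma Matrix.exists_vecMul_eq_single {m n K : Type} [Fintype m] [Fintype n] [Field K]
    (A : Matrix m n K) (j : n) (hA : ∀ f, A *ᵥ f = 0 → f j = 0) : ∃ w : m → K, w ᵥ* A = Pi.single j 1 := by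
  have hproj : LinearMap.proj j ∈ (LinearMap.ker A.mulVecLin).dualAnnihilator :=
    (Submodule.mem_dualAnnihilator _).mpr fun f hf => hA f hf
  rw [← LinearMap.range_dualMap_eq_dualAnnihilator_ker] at hproj
  obtain ⟨φ, hφ⟩ := hproj
  obtain ⟨w, rfl⟩ := (dotProductEquiv K m).surjective φ
  refine ⟨w, funext fun i => ?_⟩
  have := LinearMap.congr_fun hφ (Pi.single i 1)
  simp only [LinearMap.dualMap_apply, mulVecLin_apply, mulVec_single_one,
    LinearMap.proj_apply] at this
  rw [Pi.single_comm, ← this]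
  rfl

end LinearAlgebra

namespace SignedGraph

open Finset Matrix
open scoped Classical

variable {V E : Type} {G : SignedGraph V E}

lemma sign_mul_self (e : E) : G.sign e * G.sign e = 1 := by
  rcases G.sign_unit e with h | h <;> simp [h]

variable (G) in
/-- The boundary map of the orientation with `τ (e, true) = 1`, `τ (e, false) = -σ e`. -/
noncomputable def incMatrix (R : Type) [Ring R] : Matrix V E R :=
  Matrix.of fun v e => (if G.fst e = v then 1 else 0) - if G.snd e = v then (G.sign e : R) else 0

lemma boundary_eq_mulVec_incMatrix [Fintype E] {τ : E × Bool → ℤ} (hτ : G.IsOrientation τ)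
    (f : E → ℤ) (v : V) :
    G.boundary τ f v = (G.incMatrix ℤ *ᵥ fun e => τ (e, true) * f e) v := by
  rw [boundary, finsum_mem_def, finsum_eq_sum_of_fintype, Fintype.sum_prod_type]
  refine Finset.sum_congr rfl fun e _ => ?_
  have hτf : τ (e, false) = -G.sign e * τ (e, true) := by
    have := hτ.2 e
    rcases hτ.1 (e, true) with h | h <;> rw [h] at this ⊢ <;> linarith
  simp only [Fintype.sum_bool, Set.indicator_apply, Set.mem_ofPred_eq, ep, incMatrix, of_apply,
    Int.cast_id, hτf, if_true, Bool.false_eq_true, if_false]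
  split_ifs <;> ring

lemma vecMul_incMatrix_apply [Fintype V] {R : Type} [CommRing R] (w : V → R) (e : E) :
    (w ᵥ* G.incMatrix R) e = w (G.fst e) - G.sign e * w (G.snd e) := by
  simp [vecMul, dotProduct, incMatrix, mul_sub, Finset.sum_sub_distrib, mul_comm]

lemma incMatrix_map_intCast {R : Type} [Ring R] :
    (G.incMatrix ℤ).map (Int.cast : ℤ → R) = G.incMatrix R := by
  ext v e
  simp only [incMatrix, map_apply, of_apply]
  split_ifs <;> simp

lemma incMatrix_mulVec_intCast [Fintype E] {R : Type} [Ring R] (f : E → ℤ) :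
    (G.incMatrix R *ᵥ fun e => (f e : R)) = fun v => ((G.incMatrix ℤ *ᵥ f) v : R) := by
  rw [← incMatrix_map_intCast]
  exact funext fun v => ((Int.castRingHom R).map_mulVec _ f v).symm

lemma flowAdmissible_iff_exists_mulVec_eq_zero [Fintype E] :
    G.FlowAdmissible ↔ ∃ f : E → ℤ, G.incMatrix ℤ *ᵥ f = 0 ∧ ∀ e, f e ≠ 0 := by
  constructor
  · rintro ⟨k, -, τ, f, ⟨hτ, -, hf⟩, hnz⟩
    refine ⟨fun e => τ (e, true) * f e, funext fun v => ?_, fun e => ?_⟩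
    · rw [← boundary_eq_mulVec_incMatrix hτ, hf, Pi.zero_apply]
    · rcases hτ.1 (e, true) with h | h <;> simp [h, hnz e]
  · rintro ⟨f, hf, hnz⟩
    let τ : E × Bool → ℤ := fun h => if h.2 then 1 else -G.sign h.1
    have hτ : G.IsOrientation τ := by
      refine ⟨fun ⟨e, b⟩ => ?_, fun e => by simp [τ]⟩
      rcases G.sign_unit e with h | h <;> cases b <;> simp [τ, h]
    have hbound : ∀ e, |f e| ≤ ∑ e, |f e| := fun e =>
      Finset.single_le_sum (fun e _ => abs_nonneg (f e)) (mem_univ e)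
    have hsum : 0 ≤ ∑ e, |f e| := Finset.sum_nonneg fun e _ => abs_nonneg (f e)
    refine ⟨2 + ∑ e, |f e|, by linarith, τ, f, ⟨hτ, fun e => by linarith [hbound e], fun v => ?_⟩,
      hnz⟩
    simpa [boundary_eq_mulVec_incMatrix hτ, τ] using congrFun hf v

variable (G) in
def IsPotentialOn {R : Type} [CommRing R] (A : Set E) (w : V → R) : Prop :=
  ∀ e ∈ A, w (G.fst e) = G.sign e * w (G.snd e)

section Potential

variable {R : Type} [CommRing R] {A : Set E} {w : V → R}

lemma IsPotentialOn.apply_eq_sign_mul (hw : G.IsPotentialOn A w) {e : E} (he : e ∈ A) {x y : V}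
    (hxy : G.fst e = x ∧ G.snd e = y ∨ G.fst e = y ∧ G.snd e = x) :
    w x = G.sign e * w y := by
  rcases hxy with ⟨rfl, rfl⟩ | ⟨rfl, rfl⟩
  · exact hw e he
  · rw [hw e he, ← mul_assoc, ← Int.cast_mul, sign_mul_self, Int.cast_one, one_mul]

lemma IsPotentialOn.intCast {W : V → ℤ} (hW : G.IsPotentialOn A W) :
    G.IsPotentialOn A fun v => (W v : R) := fun e he => by
  simp only [hW e he, Int.cast_mul, Int.cast_id]

variable [LinearOrder R] [IsStrictOrderedRing R]

lemma IsPotentialOn.abs_eq_of_reachIn (hw : G.IsPotentialOn A w) {x y : V}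
    (hxy : G.reachIn A x y) : |w y| = |w x| := by
  induction hxy with
  | refl => rfl
  | tail _ hadj ih =>
    obtain ⟨e, he, hends⟩ := hadj
    rw [← ih, hw.apply_eq_sign_mul he hends.symm, abs_mul]
    rcases G.sign_unit e with h | h <;> simp [h]

lemma Circuit.prod_sign_eq_neg_one_pow (c : Circuit G) :
    ∏ i ∈ range c.n, G.sign (c.edge i) = (-1) ^ c.negCount := by
  have hneg : c.negCount = ((range c.n).filter fun i => G.sign (c.edge i) = -1).card := by
    rw [Circuit.negCount, ← Set.ncard_coe_finset]
    congr 1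
    ext i
    simp
  rw [hneg, ← prod_const, prod_filter]
  refine prod_congr rfl fun i _ => ?_
  rcases G.sign_unit (c.edge i) with h | h <;> simp [h]

lemma IsPotentialOn.isBalanced (hw : G.IsPotentialOn A w) (c : Circuit G) (hc : c.edgeSet ⊆ A)
    (h0 : w (c.vert 0) ≠ 0) : c.IsBalanced := by
  have key : ∀ k ≤ c.n,
      w (c.vert 0) = (∏ i ∈ range k, (G.sign (c.edge i) : R)) * w (c.vert (k % c.n)) := by
    intro k hk
    induction k with
    | zero => simp
    | succ k ih =>
      have hk' : k < c.n := hk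
      rw [ih hk'.le, Nat.mod_eq_of_lt hk', prod_range_succ, mul_assoc,
        ← hw.apply_eq_sign_mul (hc ⟨k, hk', rfl⟩) ((c.ends k hk').imp id And.symm)]
  have hround := key c.n le_rfl
  rw [Nat.mod_self, ← Int.cast_prod, c.prod_sign_eq_neg_one_pow] at hround
  by_contra hodd
  rw [Circuit.IsBalanced, Nat.not_even_iff_odd] at hodd
  rw [hodd.neg_one_pow, Int.cast_neg, Int.cast_one, neg_one_mul, eq_neg_iff_add_eq_zero,
    ← two_mul] at hround
  exact h0 ((mul_eq_zero.mp hround).resolve_left two_ne_zero)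

end Potential

lemma switch_eq_neg_one_iff {ε : V → ℤ} (hε : ∀ v, ε v = 1 ∨ ε v = -1) (e : E) :
    ε (G.fst e) * ε (G.snd e) * G.sign e = -1 ↔ ε (G.fst e) ≠ G.sign e * ε (G.snd e) := by
  rcases hε (G.fst e) with h1 | h1 <;> rcases hε (G.snd e) with h2 | h2 <;>
    rcases G.sign_unit e with h3 | h3 <;> simp [h1, h2, h3]

lemma exists_switchEquiv_ncard_eq_one_iff :
    (∃ σ' : E → ℤ, G.SwitchEquiv σ' ∧ {e | σ' e = -1}.ncard = 1) ↔
      ∃ e, ∃ ε : V → ℤ, (∀ v, ε v = 1 ∨ ε v = -1) ∧ G.IsPotentialOn {e' | e' ≠ e} ε ∧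
        ε (G.fst e) ≠ G.sign e * ε (G.snd e) := by
  have key : ∀ ε : V → ℤ, (∀ v, ε v = 1 ∨ ε v = -1) → ∀ e,
      ({e' | ε (G.fst e') * ε (G.snd e') * G.sign e' = -1} = {e} ↔
        G.IsPotentialOn {e' | e' ≠ e} ε ∧ ε (G.fst e) ≠ G.sign e * ε (G.snd e)) := by
    intro ε hε e
    simp only [Set.ext_iff, Set.mem_ofPred_eq, Set.mem_singleton_iff, switch_eq_neg_one_iff hε]
    exact ⟨fun h => ⟨fun e' he' => not_not.mp fun hn => he' ((h e').mp hn), (h e).mpr rfl⟩,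
      fun ⟨hpot, hne⟩ e' => ⟨fun hn => not_not.mp fun he' => hn (hpot e' he'),
        fun he' => he' ▸ hne⟩⟩
  constructor
  · rintro ⟨σ', ⟨ε, hε, hσ'⟩, hone⟩
    obtain ⟨e, he⟩ := Set.ncard_eq_one.mp hone
    rw [show σ' = fun e => ε (G.fst e) * ε (G.snd e) * G.sign e from funext hσ'] at he
    exact ⟨e, ε, hε, (key ε hε e).mp he⟩
  · rintro ⟨e, ε, hε, hpot⟩
    exact ⟨_, ⟨ε, hε, fun _ => rfl⟩, Set.ncard_eq_one.mpr ⟨e, (key ε hε e).mpr hpot⟩⟩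

lemma adjIn_symm {A : Set E} {x y : V} (h : G.adjIn A x y) : G.adjIn A y x :=
  let ⟨e, he, hends⟩ := h
  ⟨e, he, hends.symm⟩

lemma reachIn_symm {A : Set E} {x y : V} (h : G.reachIn A x y) : G.reachIn A y x := by
  induction h with
  | refl => exact .refl
  | tail _ hadj ih => exact .head (adjIn_symm hadj) ih

lemma Connected.reachIn_fst_or_reachIn_snd (hconn : G.Connected) (b : E) (v : V) :
    G.reachIn {e | e ≠ b} (G.fst b) v ∨ G.reachIn {e | e ≠ b} (G.snd b) v := by
  induction hconn (G.fst b) v with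
  | refl => exact Or.inl .refl
  | tail _ hadj ih =>
    obtain ⟨e, -, hends⟩ := hadj
    by_cases heb : e = b
    · subst heb
      rcases hends with ⟨-, rfl⟩ | ⟨rfl, -⟩
      · exact Or.inr .refl
      · exact Or.inl .refl
    · exact ih.imp (·.tail ⟨e, heb, hends⟩) (·.tail ⟨e, heb, hends⟩)

variable (G) in
/-- A walk in the subgraph with edge set `A` from `u` to `x`, given as the list of half edges
at which its steps start; the step `h` ends at the opposite half edge `(h.1, !h.2)`. -/
def IsWalk (A : Set E) : V → List (E × Bool) → V → Prop
  | u, [], x => u = x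
  | u, h :: l, x => h.1 ∈ A ∧ G.ep h = u ∧ IsWalk A (G.ep (h.1, !h.2)) l x

variable (G) in
def walkSign (l : List (E × Bool)) : ℤ := (l.map fun h => G.sign h.1).prod

section Walk

variable {A : Set E} {u x : V} {l : List (E × Bool)}

@[simp] lemma isWalk_nil : G.IsWalk A u [] x ↔ u = x := Iff.rfl

@[simp] lemma isWalk_cons {h : E × Bool} :
    G.IsWalk A u (h :: l) x ↔ h.1 ∈ A ∧ G.ep h = u ∧ G.IsWalk A (G.ep (h.1, !h.2)) l x :=
  Iff.rfl

lemma isWalk_append {l₁ l₂ : List (E × Bool)} :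
    G.IsWalk A u (l₁ ++ l₂) x ↔ ∃ y, G.IsWalk A u l₁ y ∧ G.IsWalk A y l₂ x := by
  induction l₁ generalizing u with
  | nil => simp
  | cons h l₁ ih => simp [ih, and_assoc]

lemma IsWalk.reverse (hw : G.IsWalk A u l x) :
    G.IsWalk A x (l.map fun h => (h.1, !h.2)).reverse u := by
  induction l generalizing u with
  | nil => exact hw.symm
  | cons h l ih =>
    obtain ⟨hA, rfl, hw⟩ := hw
    rw [List.map_cons, List.reverse_cons, isWalk_append]
    exact ⟨_, ih hw, by simp [hA]⟩

lemma IsWalk.take_drop (hw : G.IsWalk A u l x) {i : ℕ} (hi : i < l.length) :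
    G.IsWalk A u (l.take i) (G.ep l[i]) ∧ G.IsWalk A (G.ep l[i]) (l.drop i) x := by
  obtain ⟨y, h₁, h₂⟩ := isWalk_append.mp ((l.take_append_drop i).symm ▸ hw)
  obtain rfl : G.ep l[i] = y := by
    rw [List.drop_eq_getElem_cons hi] at h₂
    exact h₂.2.1
  exact ⟨h₁, h₂⟩

lemma IsWalk.ep_getElem_zero (hw : G.IsWalk A u l x) (hl : 0 < l.length) : G.ep l[0] = u :=
  (hw.take_drop hl).1.symm

lemma IsWalk.ep_opp_getElem (hw : G.IsWalk A u l u) {i : ℕ} (hi : i < l.length) :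
    G.ep (l[i].1, !l[i].2) =
      G.ep (l[(i + 1) % l.length]'(Nat.mod_lt _ (by omega))) := by
  have hnext := (hw.take_drop hi).2
  rw [List.drop_eq_getElem_cons hi] at hnext
  replace hnext := hnext.2.2
  rcases Nat.lt_or_ge (i + 1) l.length with hi' | hi'
  · simp only [Nat.mod_eq_of_lt hi']
    rw [List.drop_eq_getElem_cons hi'] at hnext
    exact hnext.2.1.symm
  · have hn : i + 1 = l.length := by omega
    simp only [hn, Nat.mod_self]
    rw [List.drop_eq_nil_of_le hi'] at hnext
    rw [hnext, hw.ep_getElem_zero (by omega)]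

lemma IsWalk.edge_mem (hw : G.IsWalk A u l x) {h : E × Bool} (hh : h ∈ l) : h.1 ∈ A := by
  induction l generalizing u with
  | nil => simp at hh
  | cons h' l ih =>
    rcases List.mem_cons.mp hh with rfl | hh
    · exact hw.1
    · exact ih hw.2.2 hh

lemma reachIn_iff_exists_isWalk : G.reachIn A u x ↔ ∃ l, G.IsWalk A u l x := by
  constructor
  · intro h
    induction h with
    | refl => exact ⟨[], rfl⟩
    | tail _ hadj ih =>
      obtain ⟨l, hl⟩ := ih
      obtain ⟨e, he, ⟨h₁, h₂⟩ | ⟨h₁, h₂⟩⟩ := hadj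
      · exact ⟨l ++ [(e, true)], isWalk_append.mpr ⟨_, hl, by simp [ep, he, h₁, h₂]⟩⟩
      · exact ⟨l ++ [(e, false)], isWalk_append.mpr ⟨_, hl, by simp [ep, he, h₁, h₂]⟩⟩
  · rintro ⟨l, hl⟩
    induction l generalizing u with
    | nil => exact hl ▸ .refl
    | cons h l ih =>
      obtain ⟨hA, rfl, hl⟩ := hl
      refine .head ⟨h.1, hA, ?_⟩ (ih hl)
      obtain ⟨e, _ | _⟩ := h
      · exact Or.inr ⟨rfl, rfl⟩
      · exact Or.inl ⟨rfl, rfl⟩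

end Walk

@[simp] lemma walkSign_nil : G.walkSign [] = 1 := rfl

@[simp] lemma walkSign_cons (h : E × Bool) (l : List (E × Bool)) :
    G.walkSign (h :: l) = G.sign h.1 * G.walkSign l := by
  simp [walkSign]

@[simp] lemma walkSign_append (l₁ l₂ : List (E × Bool)) :
    G.walkSign (l₁ ++ l₂) = G.walkSign l₁ * G.walkSign l₂ := by
  simp [walkSign]

@[simp] lemma walkSign_reverse_opp (l : List (E × Bool)) :
    G.walkSign (l.map fun h => (h.1, !h.2)).reverse = G.walkSign l := by
  simp [walkSign, List.prod_reverse, Function.comp_def]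

lemma walkSign_eq_one_or_neg_one (l : List (E × Bool)) :
    G.walkSign l = 1 ∨ G.walkSign l = -1 := by
  induction l with
  | nil => exact Or.inl rfl
  | cons h l ih => rcases G.sign_unit h.1 with hs | hs <;> rcases ih with ih | ih <;> simp [hs, ih]

lemma walkSign_eq_prod_range (l : List (E × Bool)) (d : E × Bool) :
    G.walkSign l = ∏ i ∈ range l.length, G.sign (l.getD i d).1 := by
  induction l with
  | nil => rfl
  | cons h l ih => rw [walkSign_cons, ih, List.length_cons, prod_range_succ']; simp [mul_comm]

/-- Distinct vertices force distinct edges, except in a closed walk `[h, (h.1, !h.2)]` of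
length two, whose sign is `σ h.1 ^ 2 = 1`. -/
lemma exists_circuit_of_isWalk_of_nodup {A : Set E} {u : V} {l : List (E × Bool)}
    (hw : G.IsWalk A u l u) (hl : G.walkSign l = -1)
    (hnd : (l.map G.ep).Nodup) :
    ∃ c : Circuit G, c.edgeSet ⊆ A ∧ ¬ c.IsBalanced ∧ c.vert 0 = u := by
  have hpos : 0 < l.length := List.length_pos_iff.mpr (by rintro rfl; simp at hl)
  set d := l[0]
  have hget : ∀ i (hi : i < l.length), l.getD i d = l[i] := fun i hi => l.getD_eq_getElem d hi
  have hinj : ∀ i j (hi : i < l.length) (hj : j < l.length), G.ep l[i] = G.ep l[j] → i = j :=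
    fun i j hi hj h => (hnd.getElem_inj_iff (hi := by simpa) (hj := by simpa)).mp (by simpa)
  have hsucc : ∀ k < l.length, (k + 1) % l.length = k + 1 ∨ k + 1 = l.length ∧
      (k + 1) % l.length = 0 := fun k hk => by
    rcases Nat.lt_or_ge (k + 1) l.length with h | h
    · exact Or.inl (Nat.mod_eq_of_lt h)
    · exact Or.inr ⟨by omega, by rw [show k + 1 = l.length by omega, Nat.mod_self]⟩
  refine ⟨⟨l.length, hpos, fun i => G.ep (l.getD i d), fun i => (l.getD i d).1,
    fun i hi j hj h => hinj i j hi hj (by simp only [hget i hi, hget j hj] at h; exact h),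
    fun i hi j hj h => ?_, fun i hi => ?_⟩, ?_, ?_, ?_⟩
  · rw [hget i hi, hget j hj] at h
    by_cases hb : l[i].2 = l[j].2
    · exact hinj i j hi hj (by rw [Prod.ext h hb])
    have hb' : l[i].2 = !l[j].2 := by
      cases h₁ : l[i].2 <;> cases h₂ : l[j].2 <;> simp_all
    have h₁ := hinj _ _ hi _
      (show G.ep l[i] = G.ep (l[(j + 1) % l.length]'(Nat.mod_lt _ hpos)) by
        rw [← hw.ep_opp_getElem hj, ← h, ← hb'])
    have h₂ := hinj _ _ _ hj
      (show G.ep (l[(i + 1) % l.length]'(Nat.mod_lt _ hpos)) = G.ep l[j] by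
        rw [← hw.ep_opp_getElem hi, h, hb', Bool.not_not])
    by_contra hij
    have hn : l.length = 2 := by
      rcases hsucc i hi with _ | _ <;> rcases hsucc j hj with _ | _ <;> omega
    have h01 : l[0].1 = l[1].1 := by
      obtain ⟨rfl, rfl⟩ | ⟨rfl, rfl⟩ : i = 0 ∧ j = 1 ∨ i = 1 ∧ j = 0 := by omega
      exacts [h, h.symm]
    rw [walkSign_eq_prod_range l d, hn] at hl
    simp only [prod_range_succ, prod_range_zero, hget 0 (by omega), hget 1 (by omega), h01,
      one_mul, sign_mul_self] at hl
    exact absurd hl (by decide)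
  · have hnext := hw.ep_opp_getElem hi
    simp only [hget i hi, hget _ (Nat.mod_lt _ hpos), ← hnext]
    obtain ⟨e, _ | _⟩ := l[i]
    · exact Or.inr ⟨rfl, rfl⟩
    · exact Or.inl ⟨rfl, rfl⟩
  · rintro _ ⟨i, hi, rfl⟩
    exact hw.edge_mem (by rw [hget i hi]; exact List.getElem_mem _)
  · rw [Circuit.IsBalanced, ← neg_one_pow_eq_one_iff_even (R := ℤ) (by decide),
      ← Circuit.prod_sign_eq_neg_one_pow]
    change ¬∏ i ∈ range l.length, G.sign (l.getD i d).1 = 1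
    rw [← walkSign_eq_prod_range, hl]
    decide
  · change G.ep (l.getD 0 d) = u
    rw [hget 0 hpos, hw.ep_getElem_zero hpos]

/-- Split the walk at a repeated vertex: one of the two closed pieces again has sign `-1`. -/
theorem exists_unbalanced_circuit_of_isWalk {A : Set E} {u : V} {l : List (E × Bool)}
    (hw : G.IsWalk A u l u) (hl : G.walkSign l = -1) :
    ∃ c : Circuit G, c.edgeSet ⊆ A ∧ ¬ c.IsBalanced ∧ G.reachIn A u (c.vert 0) := by
  by_cases hnd : (l.map G.ep).Nodup
  · obtain ⟨c, hcA, hc, hc0⟩ := exists_circuit_of_isWalk_of_nodup hw hl hnd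
    exact ⟨c, hcA, hc, hc0 ▸ .refl⟩
  rw [List.Nodup, List.pairwise_iff_getElem] at hnd
  push Not at hnd
  obtain ⟨i, j, hi, hj, hij, hrep⟩ := hnd
  simp only [List.length_map, List.getElem_map] at hi hj hrep
  have hsplit : l = l.take i ++ ((l.drop i).take (j - i) ++ l.drop j) := by
    conv_lhs => rw [← l.take_append_drop i, ← (l.drop i).take_append_drop (j - i)]
    rw [List.drop_drop, Nat.add_sub_cancel' hij.le]
  obtain ⟨hwi, hwi'⟩ := hw.take_drop hi
  have hwm := (hwi'.take_drop (i := j - i) (by simp; omega)).1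
  simp only [List.getElem_drop, Nat.add_sub_cancel' hij.le, ← hrep] at hwm
  have hwo : G.IsWalk A u (l.take i ++ l.drop j) u :=
    isWalk_append.mpr ⟨_, hwi, hrep ▸ (hw.take_drop hj).2⟩
  have hsign : G.walkSign l =
      G.walkSign ((l.drop i).take (j - i)) * G.walkSign (l.take i ++ l.drop j) := by
    conv_lhs => rw [hsplit]
    simp only [walkSign_append]
    ring
  rcases walkSign_eq_one_or_neg_one ((l.drop i).take (j - i)) with hm | hm
  · rw [hsign, hm, one_mul] at hl
    exact exists_unbalanced_circuit_of_isWalk hwo hl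
  · obtain ⟨c, hcA, hc, hreach⟩ := exists_unbalanced_circuit_of_isWalk hwm hm
    exact ⟨c, hcA, hc, (reachIn_iff_exists_isWalk.mpr ⟨_, hwi⟩).trans hreach⟩
termination_by l.length
decreasing_by all_goals simp only [List.length_map] at hi hj; simp; omega

section BalancedComponent

variable {A : Set E} {v : V}
  (hbal : ∀ c : Circuit G, c.edgeSet ⊆ A → G.reachIn A v (c.vert 0) → c.IsBalanced)
include hbal

lemma walkSign_eq_of_isWalk {x : V} {l₁ l₂ : List (E × Bool)} (h₁ : G.IsWalk A v l₁ x)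
    (h₂ : G.IsWalk A v l₂ x) : G.walkSign l₁ = G.walkSign l₂ := by
  by_contra hne
  have hsign : G.walkSign (l₁ ++ (l₂.map fun h => (h.1, !h.2)).reverse) = -1 := by
    rw [walkSign_append, walkSign_reverse_opp]
    rcases walkSign_eq_one_or_neg_one (G := G) l₁ with h | h <;>
      rcases walkSign_eq_one_or_neg_one (G := G) l₂ with h' | h' <;> simp_all
  obtain ⟨c, hcA, hc, hreach⟩ :=
    exists_unbalanced_circuit_of_isWalk (isWalk_append.mpr ⟨x, h₁, h₂.reverse⟩) hsign
  exact hc (hbal c hcA hreach)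

/-- The witness is the sign of any walk from `v` to `x`, and `0` off the component of `v`. -/
lemma exists_isPotentialOn_of_balanced :
    ∃ W : V → ℤ, G.IsPotentialOn A W ∧ ∀ x, W x ≠ 0 ↔ G.reachIn A v x := by
  let W : V → ℤ := fun x => if h : ∃ l, G.IsWalk A v l x then G.walkSign h.choose else 0
  have hW : ∀ x l, G.IsWalk A v l x → W x = G.walkSign l := fun x l hl => by
    simp only [W, dif_pos (⟨l, hl⟩ : ∃ l, G.IsWalk A v l x)]
    exact walkSign_eq_of_isWalk hbal (⟨l, hl⟩ : ∃ l, G.IsWalk A v l x).choose_spec hl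
  have hW0 : ∀ x, ¬ G.reachIn A v x → W x = 0 := fun x hx =>
    dif_neg (mt reachIn_iff_exists_isWalk.mpr hx)
  refine ⟨W, fun e he => ?_, fun x => ⟨fun hx => not_not.mp (mt (hW0 x) hx), fun hx => ?_⟩⟩
  · by_cases hr : G.reachIn A v (G.fst e)
    · obtain ⟨l, hl⟩ := reachIn_iff_exists_isWalk.mp hr
      have hl' : G.IsWalk A v (l ++ [(e, true)]) (G.snd e) :=
        isWalk_append.mpr ⟨_, hl, by simp [ep, he]⟩
      rw [hW _ _ hl, hW _ _ hl', walkSign_append, walkSign_cons, walkSign_nil, Int.cast_id,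
        mul_one, mul_left_comm, sign_mul_self, mul_one]
    · have hr' : ¬ G.reachIn A v (G.snd e) := fun h => hr (h.tail ⟨e, he, Or.inr ⟨rfl, rfl⟩⟩)
      rw [hW0 _ hr, hW0 _ hr', mul_zero]
  · obtain ⟨l, hl⟩ := reachIn_iff_exists_isWalk.mp hx
    rw [hW _ _ hl]
    rcases walkSign_eq_one_or_neg_one (G := G) l with h | h <;> simp [h]

end BalancedComponent

/-- Exactly one end of the bridge `b` lies in the balanced component, so the potential
vanishes at one end of `b` and not at the other. -/
lemma exists_isPotentialOn_of_hasBalancedComponentWithout (hconn : G.Connected) {b : E}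
    (hb : G.IsBridge b) (hbal : G.HasBalancedComponentWithout b) :
    ∃ W : V → ℤ, G.IsPotentialOn {e | e ≠ b} W ∧ W (G.fst b) ≠ G.sign b * W (G.snd b) := by
  obtain ⟨v, hv⟩ := hbal
  obtain ⟨W, hW, hWv⟩ := exists_isPotentialOn_of_balanced hv
  refine ⟨W, hW, ?_⟩
  have hb' : ¬ (G.reachIn {e | e ≠ b} v (G.fst b) ∧ G.reachIn {e | e ≠ b} v (G.snd b)) :=
    fun ⟨h₁, h₂⟩ => hb ((reachIn_symm h₁).trans h₂)
  rcases hconn.reachIn_fst_or_reachIn_snd b v with h | h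
  · have h₂ : W (G.snd b) = 0 := not_not.mp fun h₂ => hb' ⟨reachIn_symm h, (hWv _).mp h₂⟩
    rw [h₂, mul_zero]
    exact (hWv _).mpr (reachIn_symm h)
  · have h₁ : W (G.fst b) = 0 := not_not.mp fun h₁ => hb' ⟨(hWv _).mp h₁, reachIn_symm h⟩
    rw [h₁, ne_comm]
    refine mul_ne_zero ?_ ((hWv _).mpr (reachIn_symm h))
    rcases G.sign_unit b with hs | hs <;> simp [hs]

lemma hasBalancedComponentWithout_of_isPotentialOn {R : Type} [CommRing R] [LinearOrder R]
    [IsStrictOrderedRing R] {b : E} {w : V → R} (hw : G.IsPotentialOn {e | e ≠ b} w)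
    (hb : w (G.fst b) ≠ G.sign b * w (G.snd b)) : G.HasBalancedComponentWithout b := by
  obtain ⟨v, hv⟩ : ∃ v, w v ≠ 0 := by
    by_contra! h
    exact hb (by simp [h])
  refine ⟨v, fun c hc hreach => hw.isBalanced c hc ?_⟩
  rwa [← abs_ne_zero, hw.abs_eq_of_reachIn hreach, abs_ne_zero]

lemma exists_unit_isPotentialOn_of_not_isBridge {R : Type} [CommRing R] [LinearOrder R]
    [IsStrictOrderedRing R] (hconn : G.Connected) {e : E} (he : ¬ G.IsBridge e) {w : V → R}
    (hw : G.IsPotentialOn {e' | e' ≠ e} w) (hne : w (G.fst e) ≠ G.sign e * w (G.snd e)) :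
    ∃ ε : V → ℤ, (∀ v, ε v = 1 ∨ ε v = -1) ∧ G.IsPotentialOn {e' | e' ≠ e} ε ∧
      ε (G.fst e) ≠ G.sign e * ε (G.snd e) := by
  set c := |w (G.fst e)|
  have habs : ∀ u, |w u| = c := fun u => hw.abs_eq_of_reachIn <|
    (hconn.reachIn_fst_or_reachIn_snd e u).elim id (not_not.mp he).trans
  let ε : V → ℤ := fun u => if 0 ≤ w u then 1 else -1
  have hwε : ∀ u, w u = c * ε u := fun u => by
    rw [← habs u]
    simp only [ε]
    split_ifs with h
    · simp [abs_of_nonneg h]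
    · simp [abs_of_neg (not_le.mp h)]
  have hc : c ≠ 0 := fun h0 => hne (by simp [hwε, h0])
  refine ⟨ε, fun u => by simp only [ε]; split_ifs <;> simp, fun e' he' => ?_, fun h => hne ?_⟩
  · have := hw e' he'
    rw [hwε, hwε, mul_left_comm] at this
    exact_mod_cast mul_left_cancel₀ hc this
  · rw [hwε, hwε, mul_left_comm, h]
    push_cast
    ring

lemma IsPotentialOn.apply_eq_zero_of_mulVec_eq_zero [Fintype V] [Fintype E] {R : Type}
    [CommRing R] [IsDomain R] {e : E} {w : V → R} (hw : G.IsPotentialOn {e' | e' ≠ e} w)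
    (hne : w (G.fst e) ≠ G.sign e * w (G.snd e)) {f : E → R} (hf : G.incMatrix R *ᵥ f = 0) :
    f e = 0 := by
  have h := dotProduct_mulVec w (G.incMatrix R) f
  rw [hf, dotProduct_zero, dotProduct, Finset.sum_eq_single e] at h
  · rw [vecMul_incMatrix_apply] at h
    exact (mul_eq_zero.mp h.symm).resolve_left (sub_ne_zero.mpr hne)
  · intro e' _ he'
    rw [vecMul_incMatrix_apply, hw e' he', sub_self, zero_mul]
  · simp

theorem flowAdmissible_iff_forall_isPotentialOn [Fintype V] [Fintype E] :
    G.FlowAdmissible ↔ ∀ e (w : V → ℚ), G.IsPotentialOn {e' | e' ≠ e} w →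
      w (G.fst e) = G.sign e * w (G.snd e) := by
  rw [flowAdmissible_iff_exists_mulVec_eq_zero]
  constructor
  · rintro ⟨f, hf, hnz⟩ e w hw
    by_contra hne
    have hfQ : G.incMatrix ℚ *ᵥ (fun e => (f e : ℚ)) = 0 :=
      funext fun v => by simp [incMatrix_mulVec_intCast, hf]
    exact hnz e (by exact_mod_cast hw.apply_eq_zero_of_mulVec_eq_zero hne hfQ)
  · intro h
    by_contra hnone
    obtain ⟨e, he⟩ : ∃ e, ∀ f ∈ LinearMap.ker (G.incMatrix ℚ).mulVecLin, f e = 0 := by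
      by_contra! hall
      obtain ⟨f, hf, hnz⟩ := Submodule.exists_forall_apply_ne_zero _ hall
      rw [LinearMap.mem_ker, mulVecLin_apply, ← incMatrix_map_intCast] at hf
      obtain ⟨g, hg, hgf⟩ := (G.incMatrix ℤ).exists_int_mulVec_eq_zero_of_rat hf
      exact hnone ⟨g, hg, fun e => (hgf e).mpr (hnz e)⟩
    obtain ⟨w, hw⟩ := (G.incMatrix ℚ).exists_vecMul_eq_single e fun f hf => he f hf
    have hδ : ∀ e', w (G.fst e') - G.sign e' * w (G.snd e') =
        (Pi.single e 1 : E → ℚ) e' := fun e' => by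
      rw [← vecMul_incMatrix_apply, hw]
    have hpot := h e w fun e' he' => sub_eq_zero.mp ((hδ e').trans (Pi.single_eq_of_ne he' _))
    have h1 := hδ e
    rw [hpot, sub_self, Pi.single_eq_same] at h1
    exact zero_ne_one h1

end SignedGraph

/-- **Bouchet.** A connected signed graph is flow-admissible if and only
if it is not switching-equivalent to a signed graph with exactly one negative edge and
it has no bridge `b` such that `G − b` has a balanced component. -/
theorem stmt_4 {V E : Type} [Fintype V] [Fintype E] (G : SignedGraph V E)
    (hconn : G.Connected) :
    G.FlowAdmissible ↔
      (¬ ∃ σ' : E → ℤ, G.SwitchEquiv σ' ∧ {e | σ' e = -1}.ncard = 1) ∧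
      (¬ ∃ b : E, G.IsBridge b ∧ G.HasBalancedComponentWithout b) := by
  rw [SignedGraph.flowAdmissible_iff_forall_isPotentialOn,
    SignedGraph.exists_switchEquiv_ncard_eq_one_iff]
  constructor
  · intro h
    refine ⟨fun ⟨e, ε, _, hε, hne⟩ => hne ?_, fun ⟨b, hb, hbal⟩ => ?_⟩
    · exact_mod_cast h e _ hε.intCast
    · obtain ⟨W, hW, hne⟩ :=
        SignedGraph.exists_isPotentialOn_of_hasBalancedComponentWithout hconn hb hbal
      exact hne (by exact_mod_cast h b _ hW.intCast)
  · rintro ⟨hswitch, hbridge⟩ e w hw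
    by_contra hne
    by_cases he : G.IsBridge e
    · exact hbridge ⟨e, he, SignedGraph.hasBalancedComponentWithout_of_isPotentialOn hw hne⟩
    · exact hswitch ⟨e, SignedGraph.exists_unit_isPotentialOn_of_not_isBridge hconn he hw hne⟩
end

section
/- Let (G,σ) be a signed graph and H a subgraph of G. If ⟨H⟩₂ = G, then (G,σ) admits a Z₃-flow φ such that E(G) − E(H) ⊆ supp(φ). -/
namespace SignedGraph

/-- One round of `Φ₂`-operations applied to the edge set `A`: add (the edges of) every
balanced circuit `C` with `|E(C) − A| ≤ 2`. -/
noncomputable def phi2Step {V E : Type} (G : SignedGraph V E) (A : Set E) : Set E :=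
  A ∪ ⋃ (c : Circuit G) (_ : c.IsBalanced ∧ (c.edgeSet \ A).ncard ≤ 2), c.edgeSet

/-- `⟨A⟩₂`: the maximal subgraph obtainable from `A` by repeated `Φ₂`-operations. -/
noncomputable def phi2Closure {V E : Type} (G : SignedGraph V E) (A : Set E) : Set E :=
  ⋃ n : ℕ, (G.phi2Step)^[n] A

end SignedGraph


/-! Fix any orientation and compute modulo 3, by induction on the number of edges outside `H`.
If `H ≠ G`, some balanced circuit `C` has one or two edges outside `H`, and `⟨H ∪ C⟩₂ = G`
still. A balanced circuit carries a flow `f_C` with values `±1` on its edges. If `g` is a flow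
that is nonzero off `H ∪ C`, then `g + a f_C` is nonzero off `H` unless `a` is one of the at
most two values `-g(e)/f_C(e)` with `e ∈ C - H`; since `ℤ₃` has three elements, some `a` works.
Representing residues by `0, 1, 2` turns the `ℤ₃`-valued flow into the required one. -/

open Finset
open scoped Classical

theorem exists_add_mul_ne_zero {ι F : Type*} [Field F] (hF : 2 < ENat.card F) {S : Set ι}
    (hS : S.encard ≤ 2) (g f : ι → F) (hf : ∀ i ∈ S, f i ≠ 0) :
    ∃ a : F, ∀ i ∈ S, g i + a * f i ≠ 0 := by
  obtain ⟨a, ha⟩ : ∃ a, a ∉ (fun i => -g i / f i) '' S := by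
    by_contra! h
    have hB := (Set.encard_image_le (fun i => -g i / f i) S).trans hS
    rw [Set.eq_univ_of_forall h, Set.encard_univ] at hB
    exact (hB.trans_lt hF).false
  refine ⟨a, fun i hi h => ha ⟨i, hi, ?_⟩⟩
  field_simp [hf i hi]
  linear_combination -h

namespace SignedGraph

variable {V E : Type} {G : SignedGraph V E} {τ : E × Bool → ℤ}

theorem IsOrientation.mul_self (hτ : G.IsOrientation τ) (h : E × Bool) : τ h * τ h = 1 := by
  rcases hτ.1 h with h | h <;> simp [h]

theorem IsOrientation.mul_not (hτ : G.IsOrientation τ) (e : E) (b : Bool) :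
    τ (e, b) * τ (e, !b) = -G.sign e := by
  cases b
  · rw [mul_comm]; exact hτ.2 e
  · exact hτ.2 e

theorem exists_isOrientation (G : SignedGraph V E) : ∃ τ, G.IsOrientation τ := by
  refine ⟨fun h => if h.2 then 1 else -G.sign h.1, fun ⟨e, b⟩ => ?_, fun e => by simp⟩
  cases b
  · rcases G.sign_unit e with h | h <;> simp [h]
  · simp

section Boundary

variable [Fintype E] (G)

noncomputable def boundaryIn (R : Type*) [CommRing R] (τ : E × Bool → ℤ) (f : E → R) (v : V) :
    R :=
  ∑ h : E × Bool, if G.ep h = v then (τ h : R) * f h.1 else 0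

theorem boundary_eq_boundaryIn (τ : E × Bool → ℤ) (f : E → ℤ) (v : V) :
    G.boundary τ f v = G.boundaryIn ℤ τ f v := by
  rw [boundary, boundaryIn, ← coe_filter_univ, finsum_mem_coe_finset, sum_filter]
  simp

variable {R : Type*} [CommRing R]

theorem boundaryIn_intCast (τ : E × Bool → ℤ) (f : E → ℤ) (v : V) :
    G.boundaryIn R τ (fun e => (f e : R)) v = (G.boundaryIn ℤ τ f v : R) := by
  simp [boundaryIn, apply_ite (Int.cast : ℤ → R)]

theorem boundaryIn_add_mul (τ : E × Bool → ℤ) (f g : E → R) (a : R) (v : V) :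
    G.boundaryIn R τ (fun e => f e + a * g e) v =
      G.boundaryIn R τ f v + a * G.boundaryIn R τ g v := by
  simp only [boundaryIn, mul_sum, ← sum_add_distrib]
  refine sum_congr rfl fun h _ => ?_
  split_ifs <;> ring

end Boundary

namespace Circuit

variable (c : Circuit G)

theorem finite_edgeSet : c.edgeSet.Finite :=
  ((Set.finite_Iio c.n).image c.edge).subset fun _ ⟨i, hi, he⟩ => ⟨i, hi, he⟩

theorem exists_halfEdge {i : ℕ} (hi : i < c.n) :
    ∃ b, G.ep (c.edge i, b) = c.vert i ∧ G.ep (c.edge i, !b) = c.vert ((i + 1) % c.n) := by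
  rcases c.ends i hi with h | h
  · exact ⟨true, by simpa [ep] using h⟩
  · exact ⟨false, by simpa [ep] using h⟩

theorem prod_sign_eq_one (hc : c.IsBalanced) : ∏ i ∈ range c.n, G.sign (c.edge i) = 1 := by
  have hneg : c.negCount = #{i ∈ range c.n | G.sign (c.edge i) = -1} := by
    rw [negCount, ← Set.ncard_coe_finset]
    congr 1
    ext i
    simp
  have hsign : ∀ i, G.sign (c.edge i) = if G.sign (c.edge i) = -1 then -1 else 1 := fun i => by
    rcases G.sign_unit (c.edge i) with h | h <;> simp [h]
  rw [prod_congr rfl fun i _ => hsign i, prod_ite, prod_const, prod_const_one, mul_one, ← hneg]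
  exact hc.neg_one_pow

noncomputable def chain (w : ℕ → ℤ) (e : E) : ℤ :=
  ∑ i ∈ range c.n, if c.edge i = e then w i else 0

theorem chain_edge (w : ℕ → ℤ) {j : ℕ} (hj : j < c.n) : c.chain w (c.edge j) = w j := by
  rw [chain, sum_eq_single_of_mem j (mem_range.2 hj), if_pos rfl]
  exact fun i hi hij => if_neg fun h => hij (c.edge_inj i (mem_range.1 hi) j hj h)

theorem chain_eq_zero (w : ℕ → ℤ) {e : E} (he : e ∉ c.edgeSet) : c.chain w e = 0 :=
  sum_eq_zero fun i hi => if_neg fun h => he ⟨i, mem_range.1 hi, h⟩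

variable [Fintype E]

theorem boundaryIn_chain (w : ℕ → ℤ) (v : V) :
    G.boundaryIn ℤ τ (c.chain w) v = ∑ i ∈ range c.n, ∑ b : Bool,
      if G.ep (c.edge i, b) = v then τ (c.edge i, b) * w i else 0 := by
  simp only [boundaryIn, chain, mul_sum, ite_sum_zero]
  rw [sum_comm]
  refine sum_congr rfl fun i _ => ?_
  rw [Fintype.sum_prod_type, Fintype.sum_eq_single (c.edge i)]
  · simp
  · intro e he
    simp [Ne.symm he]

theorem exists_flow (hτ : G.IsOrientation τ) (hc : c.IsBalanced) :
    ∃ f : E → ℤ, (∀ e ∈ c.edgeSet, f e = 1 ∨ f e = -1) ∧ (∀ e ∉ c.edgeSet, f e = 0) ∧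
      ∀ v, G.boundaryIn ℤ τ f v = 0 := by
  have hb : ∀ i, ∃ b, i < c.n →
      G.ep (c.edge i, b) = c.vert i ∧ G.ep (c.edge i, !b) = c.vert ((i + 1) % c.n) := by
    intro i
    by_cases hi : i < c.n
    · obtain ⟨b, hb⟩ := c.exists_halfEdge hi
      exact ⟨b, fun _ => hb⟩
    · exact ⟨true, fun h => absurd h hi⟩
  choose b hb using hb
  -- `P i` is a potential at `vert i`: edge `i` carries `P i` out of `vert i` and `P (i + 1)`
  -- into `vert (i + 1)`, so the boundary telescopes; balance gives `P n = P 0`.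
  set P : ℕ → ℤ := fun i => ∏ k ∈ range i, G.sign (c.edge k) with hP
  have hP_sq : ∀ i, P i * P i = 1 := fun i => by
    rw [hP, ← prod_mul_distrib]
    exact prod_eq_one fun k _ => by rcases G.sign_unit (c.edge k) with h | h <;> simp [h]
  refine ⟨c.chain fun i => τ (c.edge i, b i) * P i, ?_, fun e => c.chain_eq_zero _, fun v => ?_⟩
  · rintro _ ⟨i, hi, rfl⟩
    rw [c.chain_edge _ hi]
    refine Int.eq_one_or_neg_one_of_mul_eq_one (v := τ (c.edge i, b i) * P i) ?_
    rw [mul_mul_mul_comm, hτ.mul_self, hP_sq, one_mul]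
  · set Q : ℕ → ℤ := fun i => if c.vert (i % c.n) = v then P i else 0 with hQ
    have hPn : P c.n = P 0 := by simp [hP, c.prod_sign_eq_one hc]
    have hQn : Q c.n = Q 0 := by rw [hQ]; dsimp only; rw [Nat.mod_self, Nat.zero_mod, hPn]
    rw [boundaryIn_chain]
    refine (sum_congr rfl fun i hi => ?_).trans
      ((sum_range_sub' Q c.n).trans (by rw [hQn, sub_self]))
    have hi' := mem_range.1 hi
    obtain ⟨hb₁, hb₂⟩ := hb i hi'
    have hsum : ∀ F : Bool → ℤ, ∑ b', F b' = F (b i) + F (!b i) := fun F => by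
      cases b i <;> simp [add_comm]
    rw [hsum, hb₁, hb₂, ← mul_assoc, hτ.mul_self, ← mul_assoc, mul_comm (τ _), hτ.mul_not]
    simp only [hQ, hP, Nat.mod_eq_of_lt hi', prod_range_succ]
    split_ifs <;> ring

end Circuit

theorem phi2Step_mono {A B : Set E} (hAB : A ⊆ B) : G.phi2Step A ⊆ G.phi2Step B := by
  refine Set.union_subset_union hAB (Set.iUnion₂_mono' fun c ⟨hc, hcA⟩ => ⟨c, ⟨hc, ?_⟩, le_rfl⟩)
  exact (Set.ncard_le_ncard (Set.sdiff_subset_sdiff_right hAB) c.finite_edgeSet.sdiff).trans hcA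

theorem phi2Closure_mono {A B : Set E} (hAB : A ⊆ B) : G.phi2Closure A ⊆ G.phi2Closure B :=
  Set.iUnion_mono fun n => by
    induction n with
    | zero => exact hAB
    | succ n ih =>
      rw [Function.iterate_succ_apply', Function.iterate_succ_apply']
      exact phi2Step_mono ih

theorem phi2Closure_eq_self {A : Set E} (hA : G.phi2Step A = A) : G.phi2Closure A = A := by
  rw [phi2Closure, Set.iUnion_congr fun n => Function.iterate_fixed hA n, Set.iUnion_const]

theorem exists_circuit_of_phi2Closure_eq_univ {A : Set E} (hcl : G.phi2Closure A = Set.univ)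
    (hA : A ≠ Set.univ) :
    ∃ c : Circuit G, c.IsBalanced ∧ (c.edgeSet \ A).ncard ≤ 2 ∧ ¬ c.edgeSet ⊆ A := by
  by_contra! h
  refine hA (hcl ▸ (phi2Closure_eq_self ?_).symm)
  exact Set.union_eq_left.2 (Set.iUnion₂_subset fun c hc => h c hc.1 hc.2)

variable [Fintype E]

theorem IsOrientation.exists_boundaryIn_eq_zero_of_phi2Closure {F : Type*} [Field F]
    (hF : 2 < ENat.card F) (hτ : G.IsOrientation τ) {A : Set E}
    (hcl : G.phi2Closure A = Set.univ) :
    ∃ g : E → F, (∀ v, G.boundaryIn F τ g v = 0) ∧ ∀ e ∉ A, g e ≠ 0 := by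
  induction hk : Aᶜ.ncard using Nat.strong_induction_on generalizing A with
  | _ k ih =>
  by_cases hA : A = Set.univ
  · exact ⟨0, fun v => by simp [boundaryIn], by simp [hA]⟩
  obtain ⟨c, hc, hcA, hcA'⟩ := exists_circuit_of_phi2Closure_eq_univ hcl hA
  obtain ⟨f, hf, hf0, hfv⟩ := c.exists_flow hτ hc
  have hlt : (A ∪ c.edgeSet)ᶜ.ncard < k := hk ▸ Set.ncard_lt_ncard
    (compl_lt_compl_iff_lt.2 (Set.ssubset_union_left_iff.2 hcA')) (Set.toFinite _)
  obtain ⟨g, hg, hgA⟩ := ih _ hlt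
    (Set.eq_univ_of_univ_subset (hcl ▸ phi2Closure_mono Set.subset_union_left)) rfl
  obtain ⟨a, ha⟩ := exists_add_mul_ne_zero hF (S := c.edgeSet \ A)
    (by rw [← c.finite_edgeSet.sdiff.cast_ncard_eq]; exact_mod_cast hcA) g (fun e => (f e : F))
    (fun e he => by rcases hf e he.1 with h | h <;> simp [h])
  refine ⟨fun e => g e + a * f e, fun v => ?_, fun e he => ?_⟩
  · rw [boundaryIn_add_mul, boundaryIn_intCast, hg, hfv, Int.cast_zero, mul_zero, add_zero]
  by_cases hec : e ∈ c.edgeSet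
  · exact ha e ⟨hec, he⟩
  · simpa [hf0 e hec] using hgA e (by simp [he, hec])

theorem IsOrientation.isZFlow_val {k : ℕ} [NeZero k] (hτ : G.IsOrientation τ) {g : E → ZMod k}
    (hg : ∀ v, G.boundaryIn (ZMod k) τ g v = 0) : G.IsZFlow k τ fun e => (g e).val := by
  refine ⟨hτ, fun e => ?_, fun v => ?_⟩
  · have := (g e).val_lt
    rw [abs_of_nonneg (Int.natCast_nonneg _)]
    omega
  · rw [boundary_eq_boundaryIn, ← ZMod.intCast_zmod_eq_zero_iff_dvd, ← boundaryIn_intCast]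
    simpa using hg v

end SignedGraph

theorem stmt_5_general {V E : Type} [Fintype E] (G : SignedGraph V E) (H : Set E)
    (hcl : G.phi2Closure H = Set.univ) :
    ∃ τ φ, G.IsZFlow 3 τ φ ∧ Hᶜ ⊆ G.supp φ := by
  obtain ⟨τ, hτ⟩ := G.exists_isOrientation
  obtain ⟨g, hg, hgH⟩ :=
    hτ.exists_boundaryIn_eq_zero_of_phi2Closure (F := ZMod 3) (by simp; decide) hcl
  exact ⟨τ, _, hτ.isZFlow_val hg,
    fun e he => Int.natCast_ne_zero.2 ((ZMod.val_ne_zero _).2 (hgH e he))⟩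

/-- **Zýka.** Let `(G,σ)` be a signed graph and `H` a subgraph (given by
its edge set). If `⟨H⟩₂ = G`, then `(G,σ)` admits a `ℤ₃`-flow `φ` with
`E(G) − E(H) ⊆ supp φ`. -/
theorem stmt_5 {V E : Type} [Fintype V] [Fintype E] (G : SignedGraph V E) (H : Set E)
    (hcl : G.phi2Closure H = Set.univ) :
    ∃ τ φ, G.IsZFlow 3 τ φ ∧ Hᶜ ⊆ G.supp φ :=
  stmt_5_general G H hcl
end

section
/- Let (G,σ) be a signed graph and C a chordless circuit all of whose edges are positive, with 2 ≤ |δ(V(C))| ≤ 3, where δ(V(C)) is the set of edges with exactly one endvertex in V(C). Let k ≥ 4 be an integer. If the signed graph (G/C, σ) obtained from (G,σ) by contracting C has a nowhere-zero k-flow f, then f can be extended to a nowhere-zero k-flow of (G,σ). -/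
namespace SignedGraph

/-- The setoid identifying all vertices of the circuit `c`. -/
def contractSetoid {V E : Type} (G : SignedGraph V E) (c : Circuit G) : Setoid V where
  r u v := u = v ∨ (u ∈ c.vertSet ∧ v ∈ c.vertSet)
  iseqv := by
    refine ⟨fun _ => Or.inl rfl, ?_, ?_⟩
    · rintro x y (rfl | ⟨h1, h2⟩)
      · exact Or.inl rfl
      · exact Or.inr ⟨h2, h1⟩
    · rintro x y z (rfl | ⟨h1, h2⟩) (rfl | ⟨h3, h4⟩)
      · exact Or.inl rfl
      · exact Or.inr ⟨h3, h4⟩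
      · exact Or.inr ⟨h1, h2⟩
      · exact Or.inr ⟨h1, h4⟩

/-- `G/C`: the signed graph obtained from `G` by contracting the (all-positive) circuit
`c`, i.e. identifying all the vertices of `c` and deleting its edges; all other edges
keep their signs. -/
def contract {V E : Type} (G : SignedGraph V E) (c : Circuit G) :
    SignedGraph (Quotient (G.contractSetoid c)) {e : E // e ∉ c.edgeSet} where
  fst e := Quotient.mk (G.contractSetoid c) (G.fst e.1)
  snd e := Quotient.mk (G.contractSetoid c) (G.snd e.1)
  sign e := G.sign e.1
  sign_unit e := G.sign_unit e.1

end SignedGraph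

/-!
Orient `C` cyclically and extend `f` by zero. The boundary `d j` this leaves at the `j`-th
vertex of `C` is cancelled by a circulation `F` around `C` exactly when
`F j = g - (d 0 + ⋯ + d j)` for a constant `g`. Since `C` is chordless, the `d j` are carried
by the at most three half edges through which `δ(V(C))` attaches to `C`, and these sum to
zero (the flow condition at the contracted vertex). Hence every interval sum of `d` is a
single such value or minus one, so lies in `[-(k-1), k-1]`, and the closed sequence of
partial sums has at most three steps, hence at most three values. These values lie in a
window of `k ≥ 4` consecutive integers, which leaves room for `g` different from all of them
and within distance `k - 1` of each.
-/

open Finset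

section Sequences

variable {α : Type*}

theorem abs_sum_le_of_card_le_one [AddCommGroup α] [LinearOrder α] [IsOrderedAddMonoid α]
    {ι : Type*} {s : Finset ι} {w : ι → α} {K : α} (hK : 0 ≤ K) (hs : s.card ≤ 1)
    (hw : ∀ i ∈ s, |w i| ≤ K) : |∑ i ∈ s, w i| ≤ K :=
  calc |∑ i ∈ s, w i| ≤ ∑ i ∈ s, |w i| := abs_sum_le_sum_abs _ _
    _ ≤ s.card • K := sum_le_card_nsmul _ _ _ hw
    _ ≤ 1 • K := nsmul_le_nsmul_left hK hs
    _ = K := one_nsmul K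

/-- Three terms summing to zero: every subsum is a single term or minus one. -/
theorem abs_sum_subset_le_of_card_le_three [AddCommGroup α] [LinearOrder α]
    [IsOrderedAddMonoid α] {ι : Type*} [DecidableEq ι] {s t : Finset ι} {w : ι → α} {K : α}
    (hK : 0 ≤ K) (hs : s.card ≤ 3) (hsum : ∑ i ∈ s, w i = 0) (hw : ∀ i ∈ s, |w i| ≤ K)
    (hts : t ⊆ s) : |∑ i ∈ t, w i| ≤ K := by
  by_cases ht : t.card ≤ 1
  · exact abs_sum_le_of_card_le_one hK ht fun i hi => hw i (hts hi)
  · have hcompl : (s \ t).card ≤ 1 := by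
      rw [card_sdiff_of_subset hts]; omega
    have hneg : ∑ i ∈ t, w i = -∑ i ∈ s \ t, w i := by
      rw [sum_sdiff_eq_sub hts, hsum, zero_sub, neg_neg]
    rw [hneg, abs_neg]
    exact abs_sum_le_of_card_le_one hK hcompl fun i hi => hw i (sdiff_subset hi)

theorem eq_of_forall_succ_eq {x : ℕ → α} {a b : ℕ} (hab : a ≤ b)
    (h : ∀ i, a ≤ i → i < b → x (i + 1) = x i) : x b = x a := by
  induction b, hab using Nat.le_induction with
  | base => rfl
  | succ b hab ih =>
    rw [h b hab (Nat.lt_succ_self b), ih fun i hai hib => h i hai (by omega)]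

/-- Each value is the one reached by the last step before it, or, before the first step,
by the last step of all. -/
theorem card_image_range_le_of_eq [DecidableEq α] {x : ℕ → α} {m : ℕ} (hx : x m = x 0) :
    ((range (m + 1)).image x).card ≤ max 1 ((range m).filter (fun i => x (i + 1) ≠ x i)).card := by
  set T := (range m).filter (fun i => x (i + 1) ≠ x i)
  have hlast : ∀ {i b}, i ∈ T → i < b → b ≤ m → (∀ t ∈ T, t < b → t ≤ i) → x b = x (i + 1) := by
    intro i b hi hib hbm hmax
    refine eq_of_forall_succ_eq hib fun t hit htb => ?_
    by_contra hne
    have := hmax t (mem_filter.2 ⟨mem_range.2 (by omega), hne⟩) htb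
    omega
  rcases T.eq_empty_or_nonempty with hT | hT
  · suffices (range (m + 1)).image x ⊆ {x 0} from (card_le_card this).trans (by simp)
    intro y hy
    obtain ⟨j, hj, rfl⟩ := mem_image.1 hy
    refine mem_singleton.2 (eq_of_forall_succ_eq (Nat.zero_le j) fun i _ hij => ?_)
    by_contra hne
    have : i ∈ T := mem_filter.2 ⟨mem_range.2 (by simp at hj; omega), hne⟩
    simp [hT] at this
  · refine le_max_of_le_right ((card_le_card (t := T.image fun i => x (i + 1)) ?_).trans
      card_image_le)
    intro y hy
    obtain ⟨j, hj, rfl⟩ := mem_image.1 hy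
    have hjm : j ≤ m := Nat.lt_succ_iff.1 (mem_range.1 hj)
    rcases (T.filter (· < j)).eq_empty_or_nonempty with hTj | hTj
    · have hj0 : x j = x 0 := eq_of_forall_succ_eq (Nat.zero_le j) fun i _ hij => by
        by_contra hne
        have : i ∈ T.filter (· < j) :=
          mem_filter.2 ⟨mem_filter.2 ⟨mem_range.2 (by omega), hne⟩, hij⟩
        simp [hTj] at this
      set i := T.max' hT
      have hi : i ∈ T := max'_mem T hT
      have him : i < m := mem_range.1 (mem_filter.1 hi).1
      exact mem_image.2 ⟨i, hi, by
        rw [hj0, ← hx, hlast hi him le_rfl fun t ht _ => le_max' T t ht]⟩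
    · set i := (T.filter (· < j)).max' hTj
      have hi := mem_filter.1 (max'_mem _ hTj)
      exact mem_image.2 ⟨i, hi.1, (hlast hi.1 hi.2 hjm fun t ht htj =>
        le_max' _ t (mem_filter.2 ⟨ht, htj⟩)).symm⟩

end Sequences

/-- `A` lies in the window `[min A, min A + k - 1]` of `k` integers. -/
theorem Int.exists_notMem_forall_abs_sub_le {A : Finset ℤ} {k : ℤ} (hA : A.Nonempty)
    (hcard : (A.card : ℤ) < k) (hdiam : ∀ a ∈ A, ∀ b ∈ A, |a - b| ≤ k - 1) :
    ∃ g ∉ A, ∀ a ∈ A, |g - a| ≤ k - 1 := by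
  set m := A.min' hA
  have hwindow : A ⊆ Icc m (m + k - 1) := fun a ha => by
    have := hdiam a ha m (min'_mem A hA)
    rw [abs_le] at this
    exact mem_Icc.2 ⟨min'_le A a ha, by omega⟩
  have hcard' : A.card < (Icc m (m + k - 1)).card := by
    rw [Int.card_Icc]; omega
  obtain ⟨g, hg, hgA⟩ := exists_mem_notMem_of_card_lt_card hcard'
  refine ⟨g, hgA, fun a ha => ?_⟩
  have hg' := mem_Icc.1 hg
  have ha' := mem_Icc.1 (hwindow ha)
  rw [abs_le]; omega

/-- The partial sums take at most three values, pairwise within distance `k - 1`. -/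
theorem exists_forall_ne_partialSum {d : ℕ → ℤ} {n : ℕ} {k : ℤ} (hk : 4 ≤ k)
    (hsum : ∑ j ∈ range n, d j = 0) (hcount : ((range n).filter (d · ≠ 0)).card ≤ 3)
    (hinterval : ∀ a b, a ≤ b → b ≤ n → |∑ j ∈ Ico a b, d j| ≤ k - 1) :
    ∃ g : ℤ, ∀ m ≤ n, g ≠ ∑ j ∈ range m, d j ∧ |g - ∑ j ∈ range m, d j| ≤ k - 1 := by
  set S : ℕ → ℤ := fun m => ∑ j ∈ range m, d j
  have hsteps : (range n).filter (fun i => S (i + 1) ≠ S i) = (range n).filter (d · ≠ 0) :=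
    filter_congr fun i _ => by simp [S, sum_range_succ]
  have hcard : ((range (n + 1)).image S).card ≤ 3 := by
    have := card_image_range_le_of_eq (x := S) (m := n) (by simpa [S] using hsum)
    rw [hsteps] at this
    omega
  have hdiam : ∀ a ∈ (range (n + 1)).image S, ∀ b ∈ (range (n + 1)).image S,
      |a - b| ≤ k - 1 := by
    have key : ∀ a b, a ≤ b → b ≤ n → |S a - S b| ≤ k - 1 := fun a b hab hbn => by
      rw [abs_sub_comm, show S b - S a = ∑ j ∈ Ico a b, d j from (sum_Ico_eq_sub d hab).symm]
      exact hinterval a b hab hbn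
    simp only [mem_image, mem_range, forall_exists_index, and_imp]
    rintro _ a ha rfl _ b hb rfl
    rcases le_total a b with hab | hba
    · exact key a b hab (by omega)
    · rw [abs_sub_comm]; exact key b a hba (by omega)
  obtain ⟨g, hg, hgS⟩ := Int.exists_notMem_forall_abs_sub_le (by simp) (by omega) hdiam
  have hmem : ∀ m ≤ n, S m ∈ (range (n + 1)).image S := fun m hm =>
    mem_image.2 ⟨m, mem_range.2 (by omega), rfl⟩
  exact ⟨g, fun m hm => ⟨fun h => hg (h ▸ hmem m hm), hgS _ (hmem m hm)⟩⟩

namespace SignedGraph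

open Classical

variable {V E : Type}

section Boundary

variable [Fintype E]

theorem boundary_eq_sum [DecidableEq V] (G : SignedGraph V E) (τ : E × Bool → ℤ) (f : E → ℤ)
    (v : V) :
    G.boundary τ f v = ∑ h with G.ep h = v, τ h * f h.1 := by
  rw [boundary, ← finsum_mem_coe_finset, coe_filter]
  simp only [mem_univ, true_and]

theorem boundary_add (G : SignedGraph V E) (τ : E × Bool → ℤ) (f g : E → ℤ) (v : V) :
    G.boundary τ (f + g) v = G.boundary τ f v + G.boundary τ g v := by
  simp only [boundary_eq_sum, Pi.add_apply, mul_add, sum_add_distrib]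

end Boundary

namespace Circuit

variable {G : SignedGraph V E} (c : Circuit G)

theorem vert_mem_vertSet {i : ℕ} (hi : i < c.n) : c.vert i ∈ c.vertSet := ⟨i, hi, rfl⟩

theorem edge_mem_edgeSet {i : ℕ} (hi : i < c.n) : c.edge i ∈ c.edgeSet := ⟨i, hi, rfl⟩

theorem ep_mem_vertSet {e : E} (he : e ∈ c.edgeSet) (b : Bool) : G.ep (e, b) ∈ c.vertSet := by
  obtain ⟨i, hi, rfl⟩ := he
  have hi' := c.vert_mem_vertSet (Nat.mod_lt (i + 1) c.n_pos)
  rcases c.ends i hi with ⟨h1, h2⟩ | ⟨h1, h2⟩ <;> cases b <;>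
    simp [ep, h1, h2, hi', c.vert_mem_vertSet hi]

/-- The position of an edge on `c` (junk value `0` off `c`). -/
noncomputable def index (e : E) : ℕ :=
  if h : ∃ i < c.n, c.edge i = e then h.choose else 0

theorem index_edge {i : ℕ} (hi : i < c.n) : c.index (c.edge i) = i := by
  have h : ∃ j < c.n, c.edge j = c.edge i := ⟨i, hi, rfl⟩
  rw [index, dif_pos h]
  exact c.edge_inj _ h.choose_spec.1 _ hi h.choose_spec.2

/-- The side of `edge i` at which it leaves `vert i`. -/
noncomputable def tailSide (i : ℕ) : Bool := decide (G.fst (c.edge i) = c.vert i)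

theorem ep_tailSide {i : ℕ} (hi : i < c.n) : G.ep (c.edge i, c.tailSide i) = c.vert i := by
  by_cases h : G.fst (c.edge i) = c.vert i
  · simp [tailSide, ep, h]
  · have := (c.ends i hi).resolve_left (by tauto)
    simp [tailSide, ep, h, this.1]

theorem ep_not_tailSide {i : ℕ} (hi : i < c.n) :
    G.ep (c.edge i, !c.tailSide i) = c.vert ((i + 1) % c.n) := by
  by_cases h : G.fst (c.edge i) = c.vert i
  · rcases c.ends i hi with ⟨-, h2⟩ | ⟨h1, h2⟩
    · simp [tailSide, ep, h, h2]
    · simp [tailSide, ep, h, h1, ← h2]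
  · have ht : c.tailSide i = false := by simp [tailSide, h]
    rw [ht]
    exact ((c.ends i hi).resolve_left (by tauto)).2

/-- The index of the edge entering `vert j`. -/
def prev (j : ℕ) : ℕ := if j = 0 then c.n - 1 else j - 1

theorem prev_lt {j : ℕ} (hj : j < c.n) : c.prev j < c.n := by
  unfold prev; split_ifs <;> omega

theorem prev_add_one_mod {j : ℕ} (hj : j < c.n) : (c.prev j + 1) % c.n = j := by
  unfold prev
  split_ifs with h
  · rw [Nat.sub_add_cancel c.n_pos, Nat.mod_self, h]
  · rw [Nat.sub_add_cancel (Nat.pos_of_ne_zero h), Nat.mod_eq_of_lt hj]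

theorem eq_prev_of_add_one_mod {i j : ℕ} (hi : i < c.n) (h : (i + 1) % c.n = j) :
    i = c.prev j := by
  unfold prev
  rcases Nat.lt_or_ge (i + 1) c.n with hlt | hge
  · rw [Nat.mod_eq_of_lt hlt] at h
    rw [if_neg (by omega)]; omega
  · rw [show i + 1 = c.n by omega, Nat.mod_self] at h
    rw [if_pos h.symm]; omega

variable [Fintype E] in
theorem filter_mem_edgeSet_ep_eq_vert {j : ℕ} (hj : j < c.n) :
    ({h | h.1 ∈ c.edgeSet ∧ G.ep h = c.vert j} : Finset (E × Bool)) =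
      {(c.edge j, c.tailSide j), (c.edge (c.prev j), !c.tailSide (c.prev j))} := by
  ext ⟨e, b⟩
  simp only [mem_filter, mem_univ, true_and, mem_insert, mem_singleton, Prod.mk.injEq]
  constructor
  · rintro ⟨⟨i, hi, rfl⟩, hep⟩
    rcases Bool.eq_or_eq_not b (c.tailSide i) with rfl | rfl
    · rw [ep_tailSide c hi] at hep
      obtain rfl := c.vert_inj i hi j hj hep
      exact Or.inl ⟨rfl, rfl⟩
    · rw [ep_not_tailSide c hi] at hep
      obtain rfl := c.eq_prev_of_add_one_mod hi (c.vert_inj _ (Nat.mod_lt _ c.n_pos) j hj hep)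
      exact Or.inr ⟨rfl, rfl⟩
  · rintro (⟨rfl, rfl⟩ | ⟨rfl, rfl⟩)
    · exact ⟨c.edge_mem_edgeSet hj, c.ep_tailSide hj⟩
    · refine ⟨c.edge_mem_edgeSet (c.prev_lt hj), ?_⟩
      rw [ep_not_tailSide c (c.prev_lt hj), c.prev_add_one_mod hj]

theorem mk_tailSide_ne_mk_not_tailSide {i j : ℕ} (hi : i < c.n) (hj : j < c.n) :
    ((c.edge i, c.tailSide i) : E × Bool) ≠ (c.edge j, !c.tailSide j) := by
  simp only [ne_eq, Prod.mk.injEq, not_and]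
  intro he
  obtain rfl := c.edge_inj i hi j hj he
  simp

theorem mk_eq_mk_iff {u v : V} :
    Quotient.mk (G.contractSetoid c) u = Quotient.mk _ v ↔
      u = v ∨ (u ∈ c.vertSet ∧ v ∈ c.vertSet) :=
  Quotient.eq

theorem contract_ep (h : {e // e ∉ c.edgeSet} × Bool) :
    (G.contract c).ep h = Quotient.mk _ (G.ep (h.1.1, h.2)) := by
  obtain ⟨e, b⟩ := h
  cases b <;> rfl

noncomputable def liftOrientation (τ : {e // e ∉ c.edgeSet} × Bool → ℤ) : E × Bool → ℤ :=
  fun h => if he : h.1 ∈ c.edgeSet then (if h.2 = c.tailSide (c.index h.1) then 1 else -1)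
    else τ (⟨h.1, he⟩, h.2)

noncomputable def extendByZero (f : {e // e ∉ c.edgeSet} → ℤ) : E → ℤ :=
  fun e => if he : e ∈ c.edgeSet then 0 else f ⟨e, he⟩

noncomputable def circulation (F : ℕ → ℤ) : E → ℤ :=
  fun e => if e ∈ c.edgeSet then F (c.index e) else 0

section Extension

variable (τ : {e // e ∉ c.edgeSet} × Bool → ℤ) (f : {e // e ∉ c.edgeSet} → ℤ) (F : ℕ → ℤ)

theorem liftOrientation_of_notMem {e : E} (he : e ∉ c.edgeSet) (b : Bool) :
    c.liftOrientation τ (e, b) = τ (⟨e, he⟩, b) := dif_neg he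

theorem liftOrientation_edge {i : ℕ} (hi : i < c.n) (b : Bool) :
    c.liftOrientation τ (c.edge i, b) = if b = c.tailSide i then 1 else -1 := by
  rw [liftOrientation, dif_pos (c.edge_mem_edgeSet hi), c.index_edge hi]

theorem isOrientation_liftOrientation (hpos : ∀ e ∈ c.edgeSet, G.sign e = 1)
    (hτ : (G.contract c).IsOrientation τ) : G.IsOrientation (c.liftOrientation τ) := by
  refine ⟨fun ⟨e, b⟩ => ?_, fun e => ?_⟩ <;> by_cases he : e ∈ c.edgeSet
  · obtain ⟨i, hi, rfl⟩ := he
    rw [c.liftOrientation_edge τ hi]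
    split_ifs <;> simp
  · rw [c.liftOrientation_of_notMem τ he]
    exact hτ.1 _
  · rw [hpos e he]
    obtain ⟨i, hi, rfl⟩ := he
    rw [c.liftOrientation_edge τ hi, c.liftOrientation_edge τ hi]
    cases c.tailSide i <;> simp
  · rw [c.liftOrientation_of_notMem τ he, c.liftOrientation_of_notMem τ he]
    exact hτ.2 ⟨e, he⟩

theorem extendByZero_of_mem {e : E} (he : e ∈ c.edgeSet) : c.extendByZero f e = 0 := dif_pos he

theorem extendByZero_of_notMem {e : E} (he : e ∉ c.edgeSet) :
    c.extendByZero f e = f ⟨e, he⟩ := dif_neg he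

theorem circulation_edge {i : ℕ} (hi : i < c.n) : c.circulation F (c.edge i) = F i := by
  rw [circulation, if_pos (c.edge_mem_edgeSet hi), c.index_edge hi]

theorem circulation_of_notMem {e : E} (he : e ∉ c.edgeSet) : c.circulation F e = 0 := if_neg he

theorem extendByZero_add_circulation_edge {i : ℕ} (hi : i < c.n) :
    (c.extendByZero f + c.circulation F) (c.edge i) = F i := by
  rw [Pi.add_apply, c.extendByZero_of_mem f (c.edge_mem_edgeSet hi), c.circulation_edge F hi,
    zero_add]

theorem extendByZero_add_circulation_of_notMem {e : E} (he : e ∉ c.edgeSet) :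
    (c.extendByZero f + c.circulation F) e = f ⟨e, he⟩ := by
  rw [Pi.add_apply, c.extendByZero_of_notMem f he, c.circulation_of_notMem F he, add_zero]

theorem nowhereZero_extendByZero_add_circulation (hnz : (G.contract c).NowhereZero f)
    (hF : ∀ i < c.n, F i ≠ 0) : G.NowhereZero (c.extendByZero f + c.circulation F) := fun e => by
  by_cases he : e ∈ c.edgeSet
  · obtain ⟨i, hi, rfl⟩ := he
    rw [c.extendByZero_add_circulation_edge f F hi]
    exact hF i hi
  · rw [c.extendByZero_add_circulation_of_notMem f F he]
    exact hnz _

section Finite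

variable [Fintype E]

theorem boundary_circulation_of_notMem (τ' : E × Bool → ℤ) {v : V} (hv : v ∉ c.vertSet) :
    G.boundary τ' (c.circulation F) v = 0 := by
  rw [boundary_eq_sum]
  refine sum_eq_zero fun h hh => ?_
  have hcirc : h.1 ∉ c.edgeSet := fun he => hv ((mem_filter.1 hh).2 ▸ c.ep_mem_vertSet he h.2)
  rw [c.circulation_of_notMem F hcirc, mul_zero]

theorem boundary_circulation_vert {j : ℕ} (hj : j < c.n) :
    G.boundary (c.liftOrientation τ) (c.circulation F) (c.vert j) = F j - F (c.prev j) := by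
  have hsupp : ∀ h ∈ ({h | G.ep h = c.vert j} : Finset (E × Bool)),
      c.liftOrientation τ h * c.circulation F h.1 ≠ 0 → h.1 ∈ c.edgeSet := fun h _ hne => by
    by_contra he
    rw [c.circulation_of_notMem F he, mul_zero] at hne
    exact hne rfl
  rw [boundary_eq_sum, ← sum_filter_of_ne hsupp, filter_filter]
  simp_rw [and_comm (a := G.ep _ = _)]
  rw [c.filter_mem_edgeSet_ep_eq_vert hj,
    sum_pair (c.mk_tailSide_ne_mk_not_tailSide hj (c.prev_lt hj)),
    c.liftOrientation_edge τ hj, c.liftOrientation_edge τ (c.prev_lt hj),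
    c.circulation_edge F hj, c.circulation_edge F (c.prev_lt hj)]
  simp [sub_eq_add_neg]

noncomputable def attachments : Finset (E × Bool) := {h | h.1 ∉ c.edgeSet ∧ G.ep h ∈ c.vertSet}

/-- What the circulation on `c` must cancel at `vert j`. -/
noncomputable def demand (j : ℕ) : ℤ :=
  G.boundary (c.liftOrientation τ) (c.extendByZero f) (c.vert j)

theorem boundary_contract_mk (v : V) :
    (G.contract c).boundary τ f (Quotient.mk _ v) =
      ∑ h with h.1 ∉ c.edgeSet ∧ Quotient.mk (G.contractSetoid c) (G.ep h) = Quotient.mk _ v,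
        c.liftOrientation τ h * c.extendByZero f h.1 := by
  rw [boundary_eq_sum]
  refine sum_bij (fun h _ => (h.1.1, h.2)) (fun h hh => ?_) (fun h _ h' _ hh' => ?_)
    (fun h hh => ?_) (fun h _ => ?_)
  · rw [mem_filter, c.contract_ep] at hh
    exact mem_filter.2 ⟨mem_univ _, h.1.2, hh.2⟩
  · obtain ⟨he, hb⟩ := Prod.mk.inj hh'
    exact Prod.ext (Subtype.ext he) hb
  · obtain ⟨-, he, hep⟩ := mem_filter.1 hh
    exact ⟨(⟨h.1, he⟩, h.2), mem_filter.2 ⟨mem_univ _, by rwa [c.contract_ep]⟩, rfl⟩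
  · rw [c.liftOrientation_of_notMem τ h.1.2, c.extendByZero_of_notMem f h.1.2]

theorem boundary_extendByZero_of_notMem {v : V} (hv : v ∉ c.vertSet) :
    G.boundary (c.liftOrientation τ) (c.extendByZero f) v =
      (G.contract c).boundary τ f (Quotient.mk _ v) := by
  rw [c.boundary_contract_mk, boundary_eq_sum]
  refine sum_congr (filter_congr fun h _ => ?_) fun _ _ => rfl
  rw [c.mk_eq_mk_iff]
  constructor
  · rintro rfl
    exact ⟨fun he => hv (c.ep_mem_vertSet he h.2), Or.inl rfl⟩
  · rintro ⟨-, rfl | ⟨-, hv'⟩⟩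
    · rfl
    · exact absurd hv' hv

theorem sum_attachments {i : ℕ} (hi : i < c.n) :
    ∑ h ∈ c.attachments, c.liftOrientation τ h * c.extendByZero f h.1 =
      (G.contract c).boundary τ f (Quotient.mk _ (c.vert i)) := by
  rw [c.boundary_contract_mk, attachments]
  refine sum_congr (filter_congr fun h _ => ?_) fun _ _ => rfl
  rw [c.mk_eq_mk_iff]
  have := c.vert_mem_vertSet hi
  constructor
  · rintro ⟨he, hv⟩
    exact ⟨he, Or.inr ⟨hv, this⟩⟩
  · rintro ⟨he, hv | ⟨hv, -⟩⟩
    · exact ⟨he, hv ▸ this⟩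
    · exact ⟨he, hv⟩

theorem sum_demand {I : Finset ℕ} (hI : I ⊆ range c.n) :
    ∑ j ∈ I, c.demand τ f j =
      ∑ h ∈ c.attachments with G.ep h ∈ I.image c.vert,
        c.liftOrientation τ h * c.extendByZero f h.1 := by
  have hinj : Set.InjOn c.vert I := fun i hi j hj h =>
    c.vert_inj i (mem_range.1 (hI hi)) j (mem_range.1 (hI hj)) h
  have hsupp : ∀ h ∈ ({h | G.ep h ∈ I.image c.vert} : Finset (E × Bool)),
      c.liftOrientation τ h * c.extendByZero f h.1 ≠ 0 → h ∈ c.attachments := fun h hh hne => by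
    have hcirc : h.1 ∉ c.edgeSet := fun he => hne (by rw [c.extendByZero_of_mem f he, mul_zero])
    obtain ⟨j, hj, hjv⟩ := mem_image.1 (mem_filter.1 hh).2
    exact mem_filter.2 ⟨mem_univ _, hcirc, hjv ▸ c.vert_mem_vertSet (mem_range.1 (hI hj))⟩
  have hfilter : c.attachments.filter (fun h => G.ep h ∈ I.image c.vert) =
      ({h | G.ep h ∈ I.image c.vert} : Finset (E × Bool)).filter (· ∈ c.attachments) := by
    ext h
    simp only [mem_filter, mem_univ, true_and]
    tauto
  simp_rw [demand, boundary_eq_sum]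
  rw [← sum_image (f := fun v => ∑ h with G.ep h = v,
    c.liftOrientation τ h * c.extendByZero f h.1) hinj, hfilter, sum_filter_of_ne hsupp,
    ← sum_fiberwise_of_maps_to (g := G.ep) fun h hh => (mem_filter.1 hh).2]
  refine sum_congr rfl fun v hv => sum_congr ?_ fun _ _ => rfl
  ext h
  simp only [mem_filter, mem_univ, true_and]
  exact ⟨fun hh => ⟨hh ▸ hv, hh⟩, fun hh => hh.2⟩

/-- For a chordless circuit, each attachment is the only half edge of its edge on `c`,
and that edge belongs to `δ(V(c))`. -/
theorem card_attachments_le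
    (hch : ∀ e ∉ c.edgeSet, ¬ (G.fst e ∈ c.vertSet ∧ G.snd e ∈ c.vertSet)) :
    c.attachments.card ≤ ({e | (G.fst e ∈ c.vertSet ∧ G.snd e ∉ c.vertSet) ∨
      (G.fst e ∉ c.vertSet ∧ G.snd e ∈ c.vertSet)} : Set E).ncard := by
  rw [← Set.ncard_coe_finset]
  refine Set.ncard_le_ncard_of_injOn Prod.fst (fun ⟨e, b⟩ hh => ?_)
    (fun ⟨e, b⟩ hh ⟨e', b'⟩ hh' he => ?_)
  · obtain ⟨-, he, hv⟩ := mem_filter.1 hh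
    have := hch e he
    cases b
    · exact Or.inr ⟨fun h => this ⟨h, hv⟩, hv⟩
    · exact Or.inl ⟨hv, fun h => this ⟨hv, h⟩⟩
  · obtain ⟨-, he₁, hv⟩ := mem_filter.1 hh
    obtain ⟨-, -, hv'⟩ := mem_filter.1 hh'
    obtain rfl : e = e' := he
    have := hch e he₁
    cases b <;> cases b'
    · rfl
    · exact (this ⟨hv', hv⟩).elim
    · exact (this ⟨hv, hv'⟩).elim
    · rfl

theorem abs_liftOrientation_mul_extendByZero_le {k : ℤ} (hflow : (G.contract c).IsFlow k τ f)
    {h : E × Bool} (hh : h ∈ c.attachments) :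
    |c.liftOrientation τ h * c.extendByZero f h.1| ≤ k - 1 := by
  have he := (mem_filter.1 hh).2.1
  rw [c.liftOrientation_of_notMem τ he, c.extendByZero_of_notMem f he, abs_mul]
  rcases hflow.1.1 (⟨h.1, he⟩, h.2) with h1 | h1 <;> simpa [h1] using hflow.2.1 _

theorem card_filter_demand_ne_zero_le :
    ((range c.n).filter (c.demand τ f · ≠ 0)).card ≤ c.attachments.card := by
  set T := (range c.n).filter (c.demand τ f · ≠ 0)
  have hinj : Set.InjOn c.vert T := fun i hi j hj h =>
    c.vert_inj i (mem_range.1 (mem_filter.1 hi).1) j (mem_range.1 (mem_filter.1 hj).1) h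
  rw [← card_image_of_injOn hinj]
  refine (card_le_card fun v hv => ?_).trans (card_image_le (f := G.ep))
  obtain ⟨j, hj, rfl⟩ := mem_image.1 hv
  obtain ⟨hjn, hne⟩ := mem_filter.1 hj
  rw [← sum_singleton (c.demand τ f) j, c.sum_demand τ f (singleton_subset_iff.2 hjn)] at hne
  obtain ⟨h, hh, -⟩ := exists_ne_zero_of_sum_ne_zero hne
  obtain ⟨hh, hep⟩ := mem_filter.1 hh
  exact mem_image.2 ⟨h, hh, by simpa using hep⟩

/-- `F i = g - (demand 0 + ⋯ + demand i)` with `g` from `exists_forall_ne_partialSum`. -/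
theorem exists_circulation
    (hch : ∀ e ∉ c.edgeSet, ¬ (G.fst e ∈ c.vertSet ∧ G.snd e ∈ c.vertSet))
    (hδ : ({e | (G.fst e ∈ c.vertSet ∧ G.snd e ∉ c.vertSet) ∨
      (G.fst e ∉ c.vertSet ∧ G.snd e ∈ c.vertSet)} : Set E).ncard ≤ 3)
    {k : ℤ} (hk : 4 ≤ k) (hflow : (G.contract c).IsFlow k τ f) :
    ∃ F : ℕ → ℤ, (∀ i < c.n, F i ≠ 0 ∧ |F i| ≤ k - 1) ∧ ∀ j < c.n,
      F j - F (c.prev j) + c.demand τ f j = 0 := by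
  have hatt : c.attachments.card ≤ 3 := (c.card_attachments_le hch).trans hδ
  have hsum_att : ∑ h ∈ c.attachments, c.liftOrientation τ h * c.extendByZero f h.1 = 0 :=
    (c.sum_attachments τ f c.n_pos).trans (hflow.2.2 _)
  have hsum : ∑ j ∈ range c.n, c.demand τ f j = 0 := by
    rw [c.sum_demand τ f subset_rfl, filter_true_of_mem fun h hh => ?_, hsum_att]
    obtain ⟨i, hi, hiv⟩ := (mem_filter.1 hh).2.2
    exact mem_image.2 ⟨i, mem_range.2 hi, hiv⟩
  have hinterval : ∀ a b, a ≤ b → b ≤ c.n → |∑ j ∈ Ico a b, c.demand τ f j| ≤ k - 1 :=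
      fun a b _ hb => by
    rw [c.sum_demand τ f fun j hj => mem_range.2 (by simp at hj; omega)]
    exact abs_sum_subset_le_of_card_le_three (by omega) hatt hsum_att
      (fun h hh => c.abs_liftOrientation_mul_extendByZero_le τ f hflow hh) (filter_subset _ _)
  obtain ⟨g, hg⟩ := exists_forall_ne_partialSum hk hsum
    ((c.card_filter_demand_ne_zero_le τ f).trans hatt) hinterval
  refine ⟨fun i => g - ∑ j ∈ range (i + 1), c.demand τ f j,
    fun i hi => ⟨sub_ne_zero.2 (hg _ hi).1, (hg _ hi).2⟩, fun j hj => ?_⟩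
  have hprev : ∑ i ∈ range (c.prev j + 1), c.demand τ f i = ∑ i ∈ range j, c.demand τ f i := by
    unfold prev
    split_ifs with h
    · rw [Nat.sub_add_cancel c.n_pos, hsum, h, sum_range_zero]
    · rw [Nat.sub_add_cancel (Nat.pos_of_ne_zero h)]
  simp only [hprev, sum_range_succ]
  ring

theorem isFlow_extendByZero_add_circulation {k : ℤ} (hpos : ∀ e ∈ c.edgeSet, G.sign e = 1)
    (hflow : (G.contract c).IsFlow k τ f) (hF : ∀ i < c.n, |F i| ≤ k - 1)
    (hFd : ∀ j < c.n, F j - F (c.prev j) + c.demand τ f j = 0) :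
    G.IsFlow k (c.liftOrientation τ) (c.extendByZero f + c.circulation F) := by
  refine ⟨c.isOrientation_liftOrientation τ hpos hflow.1, fun e => ?_, fun v => ?_⟩
  · by_cases he : e ∈ c.edgeSet
    · obtain ⟨i, hi, rfl⟩ := he
      rw [c.extendByZero_add_circulation_edge f F hi]
      exact hF i hi
    · rw [c.extendByZero_add_circulation_of_notMem f F he]
      exact hflow.2.1 _
  · rw [boundary_add]
    by_cases hv : v ∈ c.vertSet
    · obtain ⟨j, hj, rfl⟩ := hv
      rw [c.boundary_circulation_vert τ F hj, ← hFd j hj, demand]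
      ring
    · rw [c.boundary_extendByZero_of_notMem τ f hv, c.boundary_circulation_of_notMem F _ hv,
        hflow.2.2, add_zero]

end Finite

end Extension

end Circuit

end SignedGraph

theorem stmt_12_general {V E : Type} [Fintype E] (G : SignedGraph V E)
    (c : SignedGraph.Circuit G)
    (hchordless : ∀ e ∉ c.edgeSet, ¬ (G.fst e ∈ c.vertSet ∧ G.snd e ∈ c.vertSet))
    (hpos : ∀ e ∈ c.edgeSet, G.sign e = 1)
    (hδ₂ : ({e | (G.fst e ∈ c.vertSet ∧ G.snd e ∉ c.vertSet) ∨
      (G.fst e ∉ c.vertSet ∧ G.snd e ∈ c.vertSet)} : Set E).ncard ≤ 3)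
    (k : ℤ) (hk : 4 ≤ k)
    (τ : {e : E // e ∉ c.edgeSet} × Bool → ℤ) (f : {e : E // e ∉ c.edgeSet} → ℤ)
    (hflow : (G.contract c).IsFlow k τ f) (hnz : (G.contract c).NowhereZero f) :
    ∃ τ' f', G.IsFlow k τ' f' ∧ G.NowhereZero f' ∧
      ∀ (e : E) (he : e ∉ c.edgeSet),
        f' e = f ⟨e, he⟩ ∧ ∀ b, τ' (e, b) = τ (⟨e, he⟩, b) := by
  obtain ⟨F, hF, hFd⟩ := c.exists_circulation τ f hchordless hδ₂ hk hflow
  exact ⟨c.liftOrientation τ, c.extendByZero f + c.circulation F,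
    c.isFlow_extendByZero_add_circulation τ f F hpos hflow (fun i hi => (hF i hi).2) hFd,
    c.nowhereZero_extendByZero_add_circulation f F hnz (fun i hi => (hF i hi).1),
    fun e he => ⟨c.extendByZero_add_circulation_of_notMem f F he,
      c.liftOrientation_of_notMem τ he⟩⟩

/-- Let `C` be a chordless circuit of `(G,σ)` whose edges are all
positive with `2 ≤ |δ(V(C))| ≤ 3`, and let `k ≥ 4`. Every nowhere-zero `k`-flow of
`(G/C, σ)` extends to a nowhere-zero `k`-flow of `(G,σ)`. -/
theorem stmt_12 {V E : Type} [Fintype V] [Fintype E] (G : SignedGraph V E)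
    (c : SignedGraph.Circuit G)
    (hchordless : ∀ e ∉ c.edgeSet, ¬ (G.fst e ∈ c.vertSet ∧ G.snd e ∈ c.vertSet))
    (hpos : ∀ e ∈ c.edgeSet, G.sign e = 1)
    (hδ₁ : 2 ≤ ({e | (G.fst e ∈ c.vertSet ∧ G.snd e ∉ c.vertSet) ∨
      (G.fst e ∉ c.vertSet ∧ G.snd e ∈ c.vertSet)} : Set E).ncard)
    (hδ₂ : ({e | (G.fst e ∈ c.vertSet ∧ G.snd e ∉ c.vertSet) ∨
      (G.fst e ∉ c.vertSet ∧ G.snd e ∈ c.vertSet)} : Set E).ncard ≤ 3)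
    (k : ℤ) (hk : 4 ≤ k)
    (τ : {e : E // e ∉ c.edgeSet} × Bool → ℤ) (f : {e : E // e ∉ c.edgeSet} → ℤ)
    (hflow : (G.contract c).IsFlow k τ f) (hnz : (G.contract c).NowhereZero f) :
    ∃ τ' f', G.IsFlow k τ' f' ∧ G.NowhereZero f' ∧
      ∀ (e : E) (he : e ∉ c.edgeSet),
        f' e = f ⟨e, he⟩ ∧ ∀ b, τ' (e, b) = τ (⟨e, he⟩, b) :=
  stmt_12_general G c hchordless hpos hδ₂ k hk τ f hflow hnz
end
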